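/- arXiv:2203.14231 — 8 statements merged into one kernel-verified Lean document; each statement's English description precedes it below -/
import Mathlib

section
/- Let (Z, d) be a metric space with 0 < diam Z < 1 which is doubling with constant C_d, let α, τ > 1, and let (A_n)_{n≥0} be a hyperbolic-filling vertex system on Z. Then there exists a constant K = K(α, τ, C_d) ≥ 1 such that for every n ≥ 0 and every x ∈ A_n, the number of vertices (y, m) (with y ∈ A_m, m ≥ 0) distinct from (x, n) satisfying |n − m| ≤ 1 and B(x, τ^{1−|n−m|} α^{−n}) ∩ B(y, τ^{1−|n−m|} α^{−m}) ≠ ∅ is at least 1 and at most K. -/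
/-!
Every neighbour of `(x, n)` lies on one of the levels `n - 1, n, n + 1` and within distance
`2τα^{1-n}` of `x`. The vertex sets of these levels are all `α^{-(n+1)}`-separated, and in a
doubling space a ball of radius `2^k · r/2` contains at most `C_d^k` points of an `r`-separated
set (halve the radius `k` times). Choosing `k` with `4τα² ≤ 2^k` bounds the degree by `3 C_d^k`.
A neighbour exists at level `n + 1`, since `A (n + 1)` comes within `α^{-(n+1)}` of `x`.
-/

open Metric Set

def IsDoublingWith (Z : Type*) [PseudoMetricSpace Z] (C : ℕ) : Prop :=
  ∀ (z : Z) (r : ℝ), 0 < r → ∃ F : Finset Z, (ball z r ⊆ ⋃ y ∈ F, ball y (r / 2)) ∧ F.card ≤ C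

theorem IsDoublingWith.encard_le_of_pairwise {Z : Type*} [PseudoMetricSpace Z] {C : ℕ}
    (hZ : IsDoublingWith Z C) {r : ℝ} (hr : 0 < r) (k : ℕ) (x : Z) {S : Set Z}
    (hS : S.Pairwise fun a b => r ≤ dist a b) (hSx : S ⊆ ball x (2 ^ k * (r / 2))) :
    S.encard ≤ C ^ k := by
  induction k generalizing x S with
  | zero =>
    rw [pow_zero, encard_le_one_iff]
    intro a b ha hb
    by_contra hab
    have hax := mem_ball.1 (hSx ha)
    have hbx := mem_ball.1 (hSx hb)
    have := hS ha hb hab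
    linarith [dist_triangle_right a b x]
  | succ k ih =>
    obtain ⟨F, hcover, hFC⟩ := hZ x (2 ^ (k + 1) * (r / 2)) (by positivity)
    have hhalf : 2 ^ (k + 1) * (r / 2) / 2 = 2 ^ k * (r / 2) := by ring
    have hSF : S ⊆ ⋃ y ∈ F, S ∩ ball y (2 ^ k * (r / 2)) := by
      intro a ha
      obtain ⟨y, hyF, hay⟩ := mem_iUnion₂.1 (hcover (hSx ha))
      exact mem_iUnion₂.2 ⟨y, hyF, ha, hhalf ▸ hay⟩
    calc S.encard ≤ (⋃ y ∈ F, S ∩ ball y (2 ^ k * (r / 2))).encard := encard_le_encard hSF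
      _ ≤ ∑ y ∈ F, (S ∩ ball y (2 ^ k * (r / 2))).encard := F.set_encard_biUnion_le _
      _ ≤ ∑ _y ∈ F, (C ^ k : ℕ∞) :=
          Finset.sum_le_sum fun y _ => ih y (hS.mono inter_subset_left) inter_subset_right
      _ = F.card * C ^ k := by simp
      _ ≤ C ^ (k + 1) := by
          rw [pow_succ']
          exact mul_le_mul_left (by exact_mod_cast hFC) _

section HyperbolicFilling

variable {Z : Type*} [PseudoMetricSpace Z] {A : ℕ → Set Z} {α τ : ℝ} {x : Z} {n : ℕ}

def hypNeighbours (A : ℕ → Set Z) (α τ : ℝ) (x : Z) (n : ℕ) : Set (Z × ℕ) :=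
  {v | v.1 ∈ A v.2 ∧ v ≠ (x, n) ∧ ((n : ℤ) - (v.2 : ℤ)).natAbs ≤ 1 ∧
    (ball x (τ ^ (1 - |(n : ℤ) - (v.2 : ℤ)|) * α ^ (-(n : ℤ))) ∩
      ball v.1 (τ ^ (1 - |(n : ℤ) - (v.2 : ℤ)|) * α ^ (-(v.2 : ℤ)))).Nonempty}

theorem level_mem_Icc_of_mem_hypNeighbours {v : Z × ℕ} (hv : v ∈ hypNeighbours A α τ x n) :
    v.2 ∈ Finset.Icc (n - 1) (n + 1) := by
  have := hv.2.2.1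
  rw [Finset.mem_Icc]
  omega

theorem dist_lt_of_mem_hypNeighbours (hα : 1 ≤ α) (hτ : 1 ≤ τ) {v : Z × ℕ}
    (hv : v ∈ hypNeighbours A α τ x n) : dist v.1 x < 2 * τ * α ^ (1 - (n : ℤ)) := by
  obtain ⟨-, -, hlevel, z, hzx, hzv⟩ := hv
  have hτe : τ ^ (1 - |(n : ℤ) - (v.2 : ℤ)|) ≤ τ := by
    simpa using zpow_le_zpow_right₀ hτ (by linarith [abs_nonneg ((n : ℤ) - v.2)] :
      1 - |(n : ℤ) - (v.2 : ℤ)| ≤ 1)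
  have hαn : α ^ (-(n : ℤ)) ≤ α ^ (1 - (n : ℤ)) := zpow_le_zpow_right₀ hα (by omega)
  have hαm : α ^ (-(v.2 : ℤ)) ≤ α ^ (1 - (n : ℤ)) := zpow_le_zpow_right₀ hα (by omega)
  calc dist v.1 x ≤ dist v.1 z + dist z x := dist_triangle _ _ _
    _ < τ ^ (1 - |(n : ℤ) - (v.2 : ℤ)|) * α ^ (-(v.2 : ℤ)) +
        τ ^ (1 - |(n : ℤ) - (v.2 : ℤ)|) * α ^ (-(n : ℤ)) := by
          rw [dist_comm]
          exact add_lt_add (mem_ball.1 hzv) (mem_ball.1 hzx)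
    _ ≤ τ * α ^ (1 - (n : ℤ)) + τ * α ^ (1 - (n : ℤ)) := by gcongr
    _ = 2 * τ * α ^ (1 - (n : ℤ)) := by ring

theorem hypNeighbours_nonempty (hα : 0 < α) {y : Z} (hy : y ∈ A (n + 1))
    (hxy : dist x y < α ^ (-((n + 1 : ℕ) : ℤ))) : (hypNeighbours A α τ x n).Nonempty := by
  have hlevel : |(n : ℤ) - ((n + 1 : ℕ) : ℤ)| = 1 := by simp
  refine ⟨(y, n + 1), hy, by simp, by omega, x, ?_, ?_⟩ <;>
    simp only [hlevel, sub_self, zpow_zero, one_mul, mem_ball, dist_self]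
  · positivity
  · exact hxy

theorem encard_hypNeighbours_le {C : ℕ} (hZ : IsDoublingWith Z C) (hα : 1 < α) (hτ : 1 ≤ τ)
    (hA : ∀ m : ℕ, (A m).Pairwise fun a b => α ^ (-(m : ℤ)) ≤ dist a b) {k : ℕ}
    (hk : 4 * τ * α ^ 2 ≤ 2 ^ k) (x : Z) (n : ℕ) :
    (hypNeighbours A α τ x n).encard ≤ 3 * C ^ k := by
  set r : ℝ := α ^ (-((n : ℤ) + 1)) with hr_def
  have hr : 0 < r := by positivity
  have hradius : 2 * τ * α ^ (1 - (n : ℤ)) ≤ 2 ^ k * (r / 2) := by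
    rw [show 1 - (n : ℤ) = 2 + -((n : ℤ) + 1) by ring, zpow_add₀ (by positivity), ← hr_def,
      zpow_ofNat]
    nlinarith [mul_le_mul_of_nonneg_right hk hr.le]
  set R : ℝ := 2 ^ k * (r / 2)
  have hslice : ∀ m ∈ Finset.Icc (n - 1) (n + 1), (A m ∩ ball x R).encard ≤ C ^ k := by
    intro m hm
    have hmn : -((n : ℤ) + 1) ≤ -(m : ℤ) := by rw [Finset.mem_Icc] at hm; omega
    refine hZ.encard_le_of_pairwise hr k x (((hA m).mono inter_subset_left).mono' ?_)
      inter_subset_right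
    exact fun a b hab => (zpow_le_zpow_right₀ hα.le hmn).trans hab
  have hsub : hypNeighbours A α τ x n ⊆
      ⋃ m ∈ Finset.Icc (n - 1) (n + 1), (A m ∩ ball x R) ×ˢ {m} := by
    intro v hv
    refine mem_iUnion₂.2 ⟨v.2, level_mem_Icc_of_mem_hypNeighbours hv, ⟨hv.1, ?_⟩, rfl⟩
    exact mem_ball.2 ((dist_lt_of_mem_hypNeighbours hα.le hτ hv).trans_le hradius)
  calc (hypNeighbours A α τ x n).encard
      ≤ (⋃ m ∈ Finset.Icc (n - 1) (n + 1), (A m ∩ ball x R) ×ˢ {m}).encard :=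
        encard_le_encard hsub
    _ ≤ ∑ m ∈ Finset.Icc (n - 1) (n + 1), ((A m ∩ ball x R) ×ˢ ({m} : Set ℕ)).encard :=
        Finset.set_encard_biUnion_le _ _
    _ ≤ ∑ _m ∈ Finset.Icc (n - 1) (n + 1), (C ^ k : ℕ∞) := by
        refine Finset.sum_le_sum fun m hm => ?_
        rw [encard_prod, encard_singleton, mul_one]
        exact hslice m hm
    _ = (Finset.Icc (n - 1) (n + 1)).card * C ^ k := by simp
    _ ≤ 3 * C ^ k := by
        gcongr
        norm_cast
        rw [Nat.card_Icc]
        omega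

end HyperbolicFilling

/-- uniformly bounded degree of the hyperbolic filling of a doubling
metric space (Proposition 2.1 of the paper). The bound `K` depends only on `α`, `τ`
and the doubling constant `C_d`. -/
theorem stmt_1 (α τ : ℝ) (hα : 1 < α) (hτ : 1 < τ) (C_d : ℕ) (hC_d : 1 ≤ C_d) :
    ∃ K : ℕ, 1 ≤ K ∧
      ∀ (Z : Type) [MetricSpace Z] (z₀ : Z) (A : ℕ → Set Z),
        0 < Metric.diam (Set.univ : Set Z) →
        Metric.diam (Set.univ : Set Z) < 1 →
        -- Z is doubling with constant C_d
        (∀ (z : Z) (r : ℝ), 0 < r → ∃ F : Finset Z,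
            (Metric.ball z r ⊆ ⋃ y ∈ F, Metric.ball y (r / 2)) ∧ F.card ≤ C_d) →
        -- (A_n) is a hyperbolic-filling vertex system
        A 0 = {z₀} →
        (∀ n : ℕ, A n ⊆ A (n + 1)) →
        (∀ n : ℕ,
          (∀ z ∈ A n, ∀ z' ∈ A n, z ≠ z' → α ^ (-(n : ℤ)) ≤ dist z z') ∧
          (∀ ξ : Z, ∃ z ∈ A n, dist ξ z < α ^ (-(n : ℤ)))) →
        ∀ (n : ℕ) (x : Z), x ∈ A n →
          -- the set of neighbours of the vertex (x, n)
          ({v : Z × ℕ | v.1 ∈ A v.2 ∧ v ≠ (x, n) ∧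
              ((n : ℤ) - (v.2 : ℤ)).natAbs ≤ 1 ∧
              (Metric.ball x (τ ^ (1 - |(n : ℤ) - (v.2 : ℤ)|) * α ^ (-(n : ℤ))) ∩
                Metric.ball v.1
                  (τ ^ (1 - |(n : ℤ) - (v.2 : ℤ)|) * α ^ (-(v.2 : ℤ)))).Nonempty}).Finite ∧
          1 ≤ ({v : Z × ℕ | v.1 ∈ A v.2 ∧ v ≠ (x, n) ∧
              ((n : ℤ) - (v.2 : ℤ)).natAbs ≤ 1 ∧
              (Metric.ball x (τ ^ (1 - |(n : ℤ) - (v.2 : ℤ)|) * α ^ (-(n : ℤ))) ∩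
                Metric.ball v.1
                  (τ ^ (1 - |(n : ℤ) - (v.2 : ℤ)|) * α ^ (-(v.2 : ℤ)))).Nonempty}).ncard ∧
          ({v : Z × ℕ | v.1 ∈ A v.2 ∧ v ≠ (x, n) ∧
              ((n : ℤ) - (v.2 : ℤ)).natAbs ≤ 1 ∧
              (Metric.ball x (τ ^ (1 - |(n : ℤ) - (v.2 : ℤ)|) * α ^ (-(n : ℤ))) ∩
                Metric.ball v.1
                  (τ ^ (1 - |(n : ℤ) - (v.2 : ℤ)|) * α ^ (-(v.2 : ℤ)))).Nonempty}).ncard ≤ K := by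
  obtain ⟨k, hk⟩ := pow_unbounded_of_one_lt (4 * τ * α ^ 2) one_lt_two
  refine ⟨3 * C_d ^ k, Nat.one_le_iff_ne_zero.2 (by positivity), ?_⟩
  intro Z _ z₀ A _ _ hdbl _ _ hA n x _
  have hdeg := encard_hypNeighbours_le hdbl hα hτ.le (fun m => (hA m).1) hk.le x n
  obtain ⟨hfin, hle⟩ := encard_le_coe_iff_finite_ncard_le.1 (by exact_mod_cast hdeg)
  obtain ⟨y, hy, hxy⟩ := (hA (n + 1)).2 x
  have hne := hypNeighbours_nonempty (τ := τ) (zero_lt_one.trans hα) hy (by exact_mod_cast hxy)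
  exact ⟨hfin, (ncard_pos hfin).2 hne, hle⟩
end

section
/- Let (Z, d, ν) be a compact metric space with 0 < diam Z < 1 equipped with a doubling Borel measure ν with constant C_ν, let α > 1, and let (A_n)_{n≥0} be a nested sequence of subsets of Z (A_n ⊆ A_{n+1}) such that each A_n is a maximal α^{-n}-separated set. Then there exists C = C(C_ν, α) ≥ 1 such that for every n ≥ 0, C^{-1} ν(Z) ≤ Σ_{z ∈ A_n} Σ_{y ∈ A_{n+1}, B(z, α^{-n}) ∩ B(y, α^{-(n+1)}) ≠ ∅} ( ν(B(z, α^{-n})) + ν(B(y, α^{-(n+1)})) ) ≤ C ν(Z). -/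
open Metric MeasureTheory
open scoped ENNReal NNReal

lemma sep_finite {Z : Type} [MetricSpace Z] [CompactSpace Z] {A : Set Z} {ε : ℝ}
    (hε : 0 < ε) (hsep : ∀ z ∈ A, ∀ z' ∈ A, z ≠ z' → ε ≤ dist z z') : A.Finite := by
  obtain ⟨t, htf, hcov⟩ :=
    (Metric.totallyBounded_iff.mp
      (isCompact_univ : IsCompact (Set.univ : Set Z)).totallyBounded) (ε / 2) (by linarith)
  have hmem : ∀ a : A, ∃ c, c ∈ t ∧ (a : Z) ∈ ball c (ε / 2) := by
    intro a
    have := hcov (Set.mem_univ (a : Z))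
    simpa using this
  choose f hf hfb using hmem
  haveI : Finite t := htf.to_subtype
  have hinj : Function.Injective (fun a : A => (⟨f a, hf a⟩ : t)) := by
    intro a b hab
    simp only [Subtype.mk.injEq] at hab
    by_contra hne
    have hne' : (a : Z) ≠ (b : Z) := fun h => hne (Subtype.ext h)
    have h1 : dist (a : Z) (b : Z) < ε := by
      have h2 : dist (a : Z) (f a) < ε / 2 := mem_ball.mp (hfb a)
      have h3 : dist (b : Z) (f b) < ε / 2 := mem_ball.mp (hfb b)
      calc dist (a : Z) (b : Z) ≤ dist (a : Z) (f a) + dist (f a) (b : Z) := dist_triangle _ _ _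
        _ = dist (a : Z) (f a) + dist (b : Z) (f b) := by rw [hab, dist_comm (f b)]
        _ < ε := by linarith
    exact absurd (hsep a a.2 b b.2 hne') (not_le.mpr h1)
  exact Set.finite_coe_iff.mp (Finite.of_injective _ hinj)

/-- the discrete core of Lemma 2.8: at each level `n`, the total
`ν`-mass carried by the vertical edges of the hyperbolic filling between levels `n`
and `n+1` is comparable to `ν(Z)`, with a constant depending only on `C_ν` and `α`. -/
theorem stmt_5 (C_ν : ℝ≥0) (hC_ν : 1 ≤ C_ν) (α : ℝ) (hα : 1 < α) :
    ∃ C : ℝ≥0, 1 ≤ C ∧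
      ∀ (Z : Type) [MetricSpace Z] [MeasurableSpace Z] [BorelSpace Z] [CompactSpace Z]
        (ν : Measure Z) (A : ℕ → Set Z),
        0 < Metric.diam (Set.univ : Set Z) →
        Metric.diam (Set.univ : Set Z) < 1 →
        -- ν is a doubling measure with constant C_ν
        (∀ (z : Z) (r : ℝ), 0 < r →
          0 < ν (Metric.ball z r) ∧
          ν (Metric.ball z (2 * r)) ≤ (C_ν : ℝ≥0∞) * ν (Metric.ball z r) ∧
          ν (Metric.ball z (2 * r)) < ⊤) →
        -- the sets A_n are nested
        (∀ n : ℕ, A n ⊆ A (n + 1)) →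
        -- each A_n is a maximal α^{-n}-separated set
        (∀ n : ℕ,
          (∀ z ∈ A n, ∀ z' ∈ A n, z ≠ z' → α ^ (-(n : ℤ)) ≤ dist z z') ∧
          (∀ ξ : Z, ∃ z ∈ A n, dist ξ z < α ^ (-(n : ℤ)))) →
        ∀ n : ℕ,
          (C : ℝ≥0∞)⁻¹ * ν Set.univ ≤
            (∑' e : {p : Z × Z // p.1 ∈ A n ∧ p.2 ∈ A (n + 1) ∧
                (Metric.ball p.1 (α ^ (-(n : ℤ))) ∩
                  Metric.ball p.2 (α ^ (-((n : ℤ) + 1)))).Nonempty},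
              (ν (Metric.ball (e : Z × Z).1 (α ^ (-(n : ℤ)))) +
                ν (Metric.ball (e : Z × Z).2 (α ^ (-((n : ℤ) + 1)))))) ∧
          (∑' e : {p : Z × Z // p.1 ∈ A n ∧ p.2 ∈ A (n + 1) ∧
              (Metric.ball p.1 (α ^ (-(n : ℤ))) ∩
                Metric.ball p.2 (α ^ (-((n : ℤ) + 1)))).Nonempty},
            (ν (Metric.ball (e : Z × Z).1 (α ^ (-(n : ℤ)))) +
              ν (Metric.ball (e : Z × Z).2 (α ^ (-((n : ℤ) + 1)))))) ≤
            (C : ℝ≥0∞) * ν Set.univ := by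
  have hα0 : (0 : ℝ) < α := lt_trans one_pos hα
  obtain ⟨k, hk⟩ : ∃ k : ℕ, 10 * α < 2 ^ k := pow_unbounded_of_one_lt (10 * α) one_lt_two
  refine ⟨2 * C_ν ^ (k + 3), ?_, ?_⟩
  · calc (1 : ℝ≥0) = 1 * 1 := (one_mul 1).symm
      _ ≤ 2 * C_ν ^ (k + 3) := mul_le_mul' one_le_two (one_le_pow_of_one_le' hC_ν _)
  intro Z _ _ _ _ ν A hdiam0 hdiam1 hdbl hnest hmax n
  classical
  -- basic setup
  have hZne : Nonempty Z := by
    by_contra h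
    rw [not_nonempty_iff] at h
    rw [Set.univ_eq_empty_iff.mpr h, Metric.diam_empty] at hdiam0
    exact lt_irrefl 0 hdiam0
  set r : ℝ := α ^ (-(n : ℤ)) with hr_def
  set s : ℝ := α ^ (-((n : ℤ) + 1)) with hs_def
  have hr : 0 < r := zpow_pos hα0 _
  have hs : 0 < s := zpow_pos hα0 _
  have hrs : r = α * s := by
    rw [hr_def, hs_def]
    have h : (-(n : ℤ)) = 1 + (-((n : ℤ) + 1)) := by ring
    rw [h, zpow_add₀ (ne_of_gt hα0), zpow_one]
  have hsr : s ≤ r := by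
    rw [hrs]
    nlinarith [hs]
  -- finiteness of ν
  have hνfin : ν Set.univ < ⊤ := by
    obtain ⟨z₀⟩ := hZne
    have hsub : (Set.univ : Set Z) ⊆ ball z₀ (2 * 1) := by
      intro x _
      have := Metric.dist_le_diam_of_mem isCompact_univ.isBounded
        (Set.mem_univ x) (Set.mem_univ z₀)
      exact mem_ball.mpr (by linarith)
    exact lt_of_le_of_lt (measure_mono hsub) (hdbl z₀ 1 one_pos).2.2
  -- iterated doubling
  have hpow : ∀ (j : ℕ) (z : Z) (ρ : ℝ), 0 < ρ →
      ν (ball z (2 ^ j * ρ)) ≤ (C_ν : ℝ≥0∞) ^ j * ν (ball z ρ) := by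
    intro j
    induction j with
    | zero => intro z ρ hρ; simp
    | succ j ih =>
      intro z ρ hρ
      have h1 : ν (ball z (2 * (2 ^ j * ρ))) ≤ (C_ν : ℝ≥0∞) * ν (ball z (2 ^ j * ρ)) :=
        (hdbl z (2 ^ j * ρ) (by positivity)).2.1
      calc ν (ball z (2 ^ (j + 1) * ρ)) = ν (ball z (2 * (2 ^ j * ρ))) := by ring_nf
        _ ≤ (C_ν : ℝ≥0∞) * ν (ball z (2 ^ j * ρ)) := h1
        _ ≤ (C_ν : ℝ≥0∞) * ((C_ν : ℝ≥0∞) ^ j * ν (ball z ρ)) :=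
            mul_le_mul_right (ih z ρ hρ) _
        _ = (C_ν : ℝ≥0∞) ^ (j + 1) * ν (ball z ρ) := by ring
  -- finiteness of the A_m
  have hAfin : ∀ m : ℕ, (A m).Finite := fun m =>
    sep_finite (zpow_pos hα0 _) (hmax m).1
  -- the edge set
  set S : Set (Z × Z) := {p : Z × Z | p.1 ∈ A n ∧ p.2 ∈ A (n + 1) ∧
      (ball p.1 r ∩ ball p.2 s).Nonempty} with hS_def
  have hSfin : S.Finite :=
    ((hAfin n).prod (hAfin (n + 1))).subset (fun p hp => ⟨hp.1, hp.2.1⟩)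
  haveI := hSfin.fintype
  haveI := (hAfin n).fintype
  set term : Z × Z → ℝ≥0∞ := fun p => ν (ball p.1 r) + ν (ball p.2 s) with hterm_def
  set T : Finset (Z × Z) := hSfin.toFinset with hT_def
  set AF : Finset Z := (hAfin n).toFinset with hAF_def
  haveI : Fintype {p : Z × Z // p.1 ∈ A n ∧ p.2 ∈ A (n + 1) ∧
      (ball p.1 r ∩ ball p.2 s).Nonempty} := hSfin.fintype
  have htsum : (∑' e : {p : Z × Z // p.1 ∈ A n ∧ p.2 ∈ A (n + 1) ∧
        (ball p.1 r ∩ ball p.2 s).Nonempty},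
      (ν (ball (e : Z × Z).1 r) + ν (ball (e : Z × Z).2 s))) = ∑ p ∈ T, term p := by
    rw [tsum_fintype]
    exact (Finset.sum_subtype T (fun x => hSfin.mem_toFinset) term).symm
  -- membership in T
  have hmemT : ∀ p : Z × Z, p ∈ T ↔ (p.1 ∈ A n ∧ p.2 ∈ A (n + 1) ∧
      (ball p.1 r ∩ ball p.2 s).Nonempty) := fun p => hSfin.mem_toFinset
  have hmemAF : ∀ z : Z, z ∈ AF ↔ z ∈ A n := fun z => (hAfin n).mem_toFinset
  -- LOWER BOUND core
  have key_low : ν Set.univ ≤ ∑ p ∈ T, term p := by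
    have hcover : ν Set.univ ≤ ∑ z ∈ AF, ν (ball z r) := by
      have hsub : (Set.univ : Set Z) ⊆ ⋃ z ∈ AF, ball z r := by
        intro x _
        obtain ⟨z, hz, hd⟩ := (hmax n).2 x
        exact Set.mem_biUnion ((hmemAF z).mpr hz) (mem_ball.mpr hd)
      exact le_trans (measure_mono hsub) (measure_biUnion_finset_le _ _)
    have hinj : Set.InjOn (fun z : Z => (z, z)) AF := fun a _ b _ h =>
      (Prod.mk.injEq _ _ _ _).mp h |>.1
    calc ν Set.univ ≤ ∑ z ∈ AF, ν (ball z r) := hcover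
      _ ≤ ∑ z ∈ AF, term (z, z) := Finset.sum_le_sum (fun z _ => le_self_add)
      _ = ∑ p ∈ AF.image (fun z => (z, z)), term p := (Finset.sum_image hinj).symm
      _ ≤ ∑ p ∈ T, term p := by
          apply Finset.sum_le_sum_of_subset
          intro p hp
          obtain ⟨z, hz, rfl⟩ := Finset.mem_image.mp hp
          have hzA : z ∈ A n := (hmemAF z).mp hz
          exact (hmemT _).mpr ⟨hzA, hnest n hzA,
            ⟨z, mem_ball_self hr, mem_ball_self hs⟩⟩
  -- UPPER BOUND core
  have hb3 : ∀ z : Z, ν (ball z (3 * r)) ≤ (C_ν : ℝ≥0∞) ^ 3 * ν (ball z (r / 2)) := by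
    intro z
    refine le_trans (measure_mono (ball_subset_ball ?_)) (hpow 3 z (r / 2) (by positivity))
    nlinarith [hr]
  have hb3top : ∀ z : Z, ν (ball z (3 * r)) ≠ ⊤ := fun z =>
    (lt_of_le_of_lt (measure_mono (Set.subset_univ _)) hνfin).ne
  -- cardinality of fibers
  have hcard : ∀ z, ((T.filter (fun p => p.1 = z)).card : ℝ≥0∞) ≤ (C_ν : ℝ≥0∞) ^ k := by
    intro z
    set Tz := T.filter (fun p => p.1 = z) with hTz_def
    set Y : Finset Z := Tz.image Prod.snd with hY_def
    have hinj : Set.InjOn Prod.snd (Tz : Set (Z × Z)) := by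
      intro p hp q hq h
      have hp1 : p.1 = z := (Finset.mem_filter.mp hp).2
      have hq1 : q.1 = z := (Finset.mem_filter.mp hq).2
      exact Prod.ext (hp1.trans hq1.symm) h
    have hcards : Tz.card = Y.card := (Finset.card_image_of_injOn hinj).symm
    have hYprop : ∀ y ∈ Y, y ∈ A (n + 1) ∧ (ball z r ∩ ball y s).Nonempty := by
      intro y hy
      obtain ⟨p, hp, rfl⟩ := Finset.mem_image.mp hy
      have hp1 : p.1 = z := (Finset.mem_filter.mp hp).2
      have hpS := (hmemT p).mp (Finset.mem_filter.mp hp).1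
      exact ⟨hpS.2.1, hp1 ▸ hpS.2.2⟩
    have hsub1 : ∀ y ∈ Y, ball y (s / 2) ⊆ ball z (3 * r) := by
      intro y hy x hx
      obtain ⟨_, w, hw1, hw2⟩ := hYprop y hy
      have hw1' : dist w z < r := mem_ball.mp hw1
      have hw2' : dist w y < s := mem_ball.mp hw2
      have hx' : dist x y < s / 2 := mem_ball.mp hx
      have : dist x z ≤ dist x y + dist y w + dist w z := dist_triangle4 x y w z
      have hyw : dist y w = dist w y := dist_comm y w
      exact mem_ball.mpr (by rw [hyw] at this; linarith)
    have hsub2 : ∀ y ∈ Y, ball z (3 * r) ⊆ ball y (2 ^ k * (s / 2)) := by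
      intro y hy x hx
      obtain ⟨_, w, hw1, hw2⟩ := hYprop y hy
      have hw1' : dist w z < r := mem_ball.mp hw1
      have hw2' : dist w y < s := mem_ball.mp hw2
      have hx' : dist x z < 3 * r := mem_ball.mp hx
      have h5 : dist x y ≤ dist x z + dist z w + dist w y := dist_triangle4 x z w y
      have hzw : dist z w = dist w z := dist_comm z w
      have h10 : 5 * r ≤ 2 ^ k * (s / 2) := by
        have : 5 * r = (10 * α) * (s / 2) := by rw [hrs]; ring
        rw [this]
        have h2k : (10 * α) ≤ 2 ^ k := le_of_lt hk
        nlinarith [hs]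
      refine mem_ball.mpr (lt_of_lt_of_le ?_ h10)
      rw [hzw] at h5
      linarith
    have hkey : ∀ y ∈ Y, ν (ball z (3 * r)) ≤ (C_ν : ℝ≥0∞) ^ k * ν (ball y (s / 2)) :=
      fun y hy => le_trans (measure_mono (hsub2 y hy)) (hpow k y (s / 2) (by positivity))
    have hdisj : (Y : Set Z).PairwiseDisjoint (fun y => ball y (s / 2)) := by
      intro a ha b hb hab
      have haA : a ∈ A (n + 1) := (hYprop a ha).1
      have hbA : b ∈ A (n + 1) := (hYprop b hb).1
      have hd : s ≤ dist a b := (hmax (n + 1)).1 a haA b hbA hab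
      exact ball_disjoint_ball (by linarith)
    have hchain : (Y.card : ℝ≥0∞) * ν (ball z (3 * r)) ≤
        (C_ν : ℝ≥0∞) ^ k * ν (ball z (3 * r)) := by
      calc (Y.card : ℝ≥0∞) * ν (ball z (3 * r))
          = ∑ _y ∈ Y, ν (ball z (3 * r)) := by rw [Finset.sum_const, nsmul_eq_mul]
        _ ≤ ∑ y ∈ Y, (C_ν : ℝ≥0∞) ^ k * ν (ball y (s / 2)) := Finset.sum_le_sum hkey
        _ = (C_ν : ℝ≥0∞) ^ k * ∑ y ∈ Y, ν (ball y (s / 2)) := by rw [Finset.mul_sum]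
        _ = (C_ν : ℝ≥0∞) ^ k * ν (⋃ y ∈ Y, ball y (s / 2)) := by
            rw [measure_biUnion_finset hdisj (fun _ _ => measurableSet_ball)]
        _ ≤ (C_ν : ℝ≥0∞) ^ k * ν (ball z (3 * r)) :=
            mul_le_mul_right (measure_mono (Set.iUnion₂_subset hsub1)) _
    have h0 : ν (ball z (3 * r)) ≠ 0 := (hdbl z (3 * r) (by positivity)).1.ne'
    rw [hcards]
    exact (ENNReal.mul_le_mul_iff_left h0 (hb3top z)).mp hchain
  -- per-edge bound
  have htermb : ∀ z, ∀ p ∈ T.filter (fun p => p.1 = z),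
      term p ≤ 2 * ((C_ν : ℝ≥0∞) ^ 3 * ν (ball z (r / 2))) := by
    intro z p hp
    have hp1 : p.1 = z := (Finset.mem_filter.mp hp).2
    have hpS := (hmemT p).mp (Finset.mem_filter.mp hp).1
    obtain ⟨w, hw1, hw2⟩ := hpS.2.2
    have hw1' : dist w p.1 < r := mem_ball.mp hw1
    have hw2' : dist w p.2 < s := mem_ball.mp hw2
    have hsub1 : ball p.1 r ⊆ ball z (3 * r) := by
      rw [hp1]; exact ball_subset_ball (by linarith)
    have hsub2 : ball p.2 s ⊆ ball z (3 * r) := by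
      rw [← hp1]
      intro x hx
      have hx' : dist x p.2 < s := mem_ball.mp hx
      have h5 : dist x p.1 ≤ dist x p.2 + dist p.2 w + dist w p.1 := dist_triangle4 _ _ _ _
      have : dist p.2 w = dist w p.2 := dist_comm _ _
      exact mem_ball.mpr (by rw [this] at h5; linarith)
    calc term p = ν (ball p.1 r) + ν (ball p.2 s) := rfl
      _ ≤ ν (ball z (3 * r)) + ν (ball z (3 * r)) :=
          add_le_add (measure_mono hsub1) (measure_mono hsub2)
      _ = 2 * ν (ball z (3 * r)) := (two_mul _).symm
      _ ≤ 2 * ((C_ν : ℝ≥0∞) ^ 3 * ν (ball z (r / 2))) := mul_le_mul_right (hb3 z) _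
  -- disjointness at level n
  have hdisjn : (AF : Set Z).PairwiseDisjoint (fun z => ball z (r / 2)) := by
    intro a ha b hb hab
    have haA : a ∈ A n := (hmemAF a).mp ha
    have hbA : b ∈ A n := (hmemAF b).mp hb
    have hd : r ≤ dist a b := (hmax n).1 a haA b hbA hab
    exact ball_disjoint_ball (by linarith)
  have key_up : ∑ p ∈ T, term p ≤
      ((2 * C_ν ^ (k + 3) : ℝ≥0) : ℝ≥0∞) * ν Set.univ := by
    have hmaps : ∀ p ∈ T, p.1 ∈ AF := fun p hp => (hmemAF p.1).mpr ((hmemT p).mp hp).1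
    rw [← Finset.sum_fiberwise_of_maps_to hmaps term]
    have hCeq : ((2 * C_ν ^ (k + 3) : ℝ≥0) : ℝ≥0∞) = 2 * (C_ν : ℝ≥0∞) ^ (k + 3) := by
      push_cast; ring
    calc ∑ z ∈ AF, ∑ p ∈ T.filter (fun p => p.1 = z), term p
        ≤ ∑ z ∈ AF, (C_ν : ℝ≥0∞) ^ k * (2 * ((C_ν : ℝ≥0∞) ^ 3 * ν (ball z (r / 2)))) := by
          refine Finset.sum_le_sum (fun z _ => ?_)
          calc ∑ p ∈ T.filter (fun p => p.1 = z), term p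
              ≤ (T.filter (fun p => p.1 = z)).card •
                  (2 * ((C_ν : ℝ≥0∞) ^ 3 * ν (ball z (r / 2)))) :=
                Finset.sum_le_card_nsmul _ _ _ (htermb z)
            _ = ((T.filter (fun p => p.1 = z)).card : ℝ≥0∞) *
                  (2 * ((C_ν : ℝ≥0∞) ^ 3 * ν (ball z (r / 2)))) := nsmul_eq_mul _ _
            _ ≤ (C_ν : ℝ≥0∞) ^ k * (2 * ((C_ν : ℝ≥0∞) ^ 3 * ν (ball z (r / 2)))) :=
                mul_le_mul_left (hcard z) _
      _ = 2 * (C_ν : ℝ≥0∞) ^ (k + 3) * ∑ z ∈ AF, ν (ball z (r / 2)) := by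
          rw [Finset.mul_sum]
          refine Finset.sum_congr rfl (fun z _ => ?_)
          rw [pow_add]
          ring
      _ = 2 * (C_ν : ℝ≥0∞) ^ (k + 3) * ν (⋃ z ∈ AF, ball z (r / 2)) := by
          rw [measure_biUnion_finset hdisjn (fun _ _ => measurableSet_ball)]
      _ ≤ 2 * (C_ν : ℝ≥0∞) ^ (k + 3) * ν Set.univ :=
          mul_le_mul_right (measure_mono (Set.subset_univ _)) _
      _ = ((2 * C_ν ^ (k + 3) : ℝ≥0) : ℝ≥0∞) * ν Set.univ := by rw [hCeq]
  -- conclusion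
  have hCge1 : (1 : ℝ≥0∞) ≤ ((2 * C_ν ^ (k + 3) : ℝ≥0) : ℝ≥0∞) := by
    rw [← ENNReal.coe_one, ENNReal.coe_le_coe]
    calc (1 : ℝ≥0) = 1 * 1 := (one_mul 1).symm
      _ ≤ 2 * C_ν ^ (k + 3) := mul_le_mul' one_le_two (one_le_pow_of_one_le' hC_ν _)
  constructor
  · rw [htsum]
    calc ((2 * C_ν ^ (k + 3) : ℝ≥0) : ℝ≥0∞)⁻¹ * ν Set.univ
        ≤ 1 * ν Set.univ := mul_le_mul_left (ENNReal.inv_le_one.mpr hCge1) _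
      _ = ν Set.univ := one_mul _
      _ ≤ ∑ p ∈ T, term p := key_low
  · rw [htsum]
    exact key_up
end

section
/- Let p > 1, ε > 0, 0 ≤ a < b < ∞, and let ρ : [a, b] → (0, ∞) be a Borel function with ∫_a^b e^{-εpt/(p-1)} ρ(t)^{-1/(p-1)} dt = ∞. Then there exists a Borel function h : [a, b] → [0, ∞) such that ∫_a^b h(t)^p ρ(t) dt < ∞ and ∫_a^b h(t) e^{-εt} dt = ∞. -/
/-!
Let `G(t) = e^{-εpt/(p-1)} ρ(t)^{-1/(p-1)}`, so that `μ = G dt` on `[a, b]` is a σ-finite measure of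
infinite total mass. Cutting such a measure into disjoint pieces `D k` with `1 ≤ μ (D k) < ∞` and
putting `φ = 1 / ((k + 1) μ (D k))` on `D k` gives `∫ φ dμ = ∑ 1/(k+1) = ∞` but
`∫ φ^p dμ ≤ ∑ (k+1)^{-p} < ∞`. For `h = e^{εt} G φ` one has `h e^{-εt} = G φ` and, because `p` and
`p/(p-1)` are conjugate exponents, `h^p ρ = G φ^p`.
-/

open MeasureTheory Set Filter Topology Function
open scoped ENNReal NNReal

theorem Nat.exists_strictMono_forall_rel_succ {r : ℕ → ℕ → Prop} (h : ∀ n, ∃ m, n < m ∧ r n m) :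
    ∃ u : ℕ → ℕ, StrictMono u ∧ ∀ k, r (u k) (u (k + 1)) := by
  choose f hlt hr using h
  refine ⟨fun k => f^[k] 0, strictMono_nat_of_lt_succ fun k => ?_, fun k => ?_⟩ <;>
    simp only [Function.iterate_succ_apply']
  exacts [hlt _, hr _]

theorem tsum_indicator_apply_of_mem {ι α M : Type*} [AddCommMonoid M] [TopologicalSpace M]
    {D : ι → Set α} (hD : Pairwise (Disjoint on D)) (f : ι → α → M) {k : ι} {x : α}
    (hx : x ∈ D k) : ∑' j, (D j).indicator (f j) x = f k x := by
  rw [tsum_eq_single k fun j hj => indicator_of_notMem (hD hj.symm |>.notMem_of_mem_left hx) _]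
  exact indicator_of_mem hx _

theorem comp_tsum_indicator_const_apply {ι α M N : Type*} [AddCommMonoid M] [TopologicalSpace M]
    [AddCommMonoid N] [TopologicalSpace N] {D : ι → Set α} (hD : Pairwise (Disjoint on D))
    (f : ι → M) {g : M → N} (hg : g 0 = 0) (x : α) :
    g (∑' k, (D k).indicator (fun _ => f k) x) = ∑' k, (D k).indicator (fun _ => g (f k)) x := by
  by_cases hx : ∃ k, x ∈ D k
  · obtain ⟨k, hk⟩ := hx
    rw [tsum_indicator_apply_of_mem hD _ hk, tsum_indicator_apply_of_mem hD _ hk]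
  · simp_all [not_exists]

theorem ENNReal.tsum_natCast_add_one_inv : ∑' k : ℕ, ((k : ℝ≥0∞) + 1)⁻¹ = ∞ := by
  have h (k : ℕ) : ((k : ℝ≥0∞) + 1)⁻¹ = ((((k + 1 : ℕ) : ℝ≥0))⁻¹ : ℝ≥0) := by
    push_cast
    rw [ENNReal.coe_inv (by positivity)]
    simp
  simp_rw [h, ← not_ne_iff, ENNReal.tsum_coe_ne_top_iff_summable,
    NNReal.summable_nat_add_iff 1 (f := fun n : ℕ => ((n : ℝ≥0))⁻¹), ← NNReal.summable_coe]
  push_cast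
  exact Real.not_summable_natCast_inv

theorem ENNReal.tsum_natCast_add_one_inv_rpow_lt_top {p : ℝ} (hp : 1 < p) :
    ∑' k : ℕ, ((k : ℝ≥0∞) + 1)⁻¹ ^ p < ∞ := by
  have h (k : ℕ) : ((k : ℝ≥0∞) + 1)⁻¹ ^ p = (((((k + 1 : ℕ) : ℝ≥0)) ^ p)⁻¹ : ℝ≥0) := by
    rw [ENNReal.coe_inv (by positivity), ENNReal.coe_rpow_of_nonneg _ (by linarith),
      ENNReal.inv_rpow]
    push_cast
    rfl
  simp_rw [h]
  refine (ENNReal.tsum_coe_ne_top_iff_summable.2 ?_).lt_top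
  exact (NNReal.summable_nat_add_iff 1 (f := fun n : ℕ => ((n : ℝ≥0) ^ p)⁻¹)).2
    (NNReal.summable_rpow_inv.2 hp)

namespace MeasureTheory

variable {α : Type*} [MeasurableSpace α] {μ : Measure α}

theorem exists_pairwise_disjoint_one_le_measure_lt_top [SigmaFinite μ] (hμ : μ univ = ∞) :
    ∃ D : ℕ → Set α, (∀ k, MeasurableSet (D k)) ∧ Pairwise (Disjoint on D) ∧
      ∀ k, 1 ≤ μ (D k) ∧ μ (D k) < ∞ := by
  have hS : Tendsto (μ ∘ spanningSets μ) atTop (𝓝 ∞) := by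
    simpa [hμ] using tendsto_measure_iUnion_atTop (μ := μ) (monotone_spanningSets μ)
  have hstep (n : ℕ) : ∃ m, n < m ∧ μ (spanningSets μ n) + 1 ≤ μ (spanningSets μ m) := by
    have hlt : μ (spanningSets μ n) + 1 < ∞ := by
      simpa using measure_spanningSets_lt_top μ n
    obtain ⟨m, hm, hnm⟩ :=
      ((hS.eventually (Ioi_mem_nhds hlt)).and (eventually_gt_atTop n)).exists
    exact ⟨m, hnm, hm.le⟩
  obtain ⟨u, hu, hstep⟩ := Nat.exists_strictMono_forall_rel_succ hstep
  set T := spanningSets μ ∘ u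
  have hT : Monotone T := (monotone_spanningSets μ).comp hu.monotone
  refine ⟨fun k => T (k + 1) \ T k, fun k => ?_, fun i j hij => ?_, fun k => ⟨?_, ?_⟩⟩
  · exact (measurableSet_spanningSets μ _).diff (measurableSet_spanningSets μ _)
  · have := disjoint_disjointed T (show i + 1 ≠ j + 1 by simpa using hij)
    simpa only [onFun, hT.disjointed_add_one] using this
  · calc 1 ≤ μ (T (k + 1)) - μ (T k) :=
          ENNReal.le_sub_of_add_le_left (measure_spanningSets_lt_top μ _).ne (hstep k)
      _ ≤ μ (T (k + 1) \ T k) := le_measure_sdiff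
  · exact (measure_mono sdiff_subset).trans_lt (measure_spanningSets_lt_top μ _)

theorem lintegral_tsum_indicator_const {ι : Type*} [Countable ι] {D : ι → Set α}
    (hD : ∀ k, MeasurableSet (D k)) (c : ι → ℝ≥0∞) :
    ∫⁻ x, ∑' k, (D k).indicator (fun _ => c k) x ∂μ = ∑' k, c k * μ (D k) := by
  rw [lintegral_tsum fun k => (measurable_const.indicator (hD k)).aemeasurable]
  simp_rw [lintegral_indicator_const (hD _)]

theorem exists_lintegral_rpow_lt_top_lintegral_eq_top [SigmaFinite μ] (hμ : μ univ = ∞) {p : ℝ}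
    (hp : 1 < p) :
    ∃ φ : α → ℝ≥0∞, Measurable φ ∧ (∀ x, φ x ≠ ∞) ∧ ∫⁻ x, φ x ^ p ∂μ < ∞ ∧ ∫⁻ x, φ x ∂μ = ∞ := by
  obtain ⟨D, hDm, hDd, hD⟩ := exists_pairwise_disjoint_one_le_measure_lt_top hμ
  have hD0 k : μ (D k) ≠ 0 := (zero_lt_one.trans_le (hD k).1).ne'
  set c : ℕ → ℝ≥0∞ := fun k => ((k : ℝ≥0∞) + 1)⁻¹ * (μ (D k))⁻¹
  have hcμ k : c k * μ (D k) = ((k : ℝ≥0∞) + 1)⁻¹ := by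
    rw [mul_assoc, ENNReal.inv_mul_cancel (hD0 k) (hD k).2.ne, mul_one]
  have hcμp k : c k ^ p * μ (D k) ≤ ((k : ℝ≥0∞) + 1)⁻¹ ^ p :=
    calc c k ^ p * μ (D k) = ((k : ℝ≥0∞) + 1)⁻¹ ^ p * ((μ (D k))⁻¹ ^ p * μ (D k)) := by
          rw [ENNReal.mul_rpow_of_nonneg _ _ (by linarith), mul_assoc]
      _ ≤ ((k : ℝ≥0∞) + 1)⁻¹ ^ p * ((μ (D k))⁻¹ ^ (1 : ℝ) * μ (D k)) := by
          gcongr _ * (?_ * _)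
          exact ENNReal.rpow_le_rpow_of_exponent_ge (ENNReal.inv_le_one.2 (hD k).1) hp.le
      _ = ((k : ℝ≥0∞) + 1)⁻¹ ^ p := by
          rw [ENNReal.rpow_one, ENNReal.inv_mul_cancel (hD0 k) (hD k).2.ne, mul_one]
  refine ⟨fun x => ∑' k, (D k).indicator (fun _ => c k) x,
    Measurable.tsum fun k => measurable_const.indicator (hDm k), fun x => ?_, ?_, ?_⟩
  · dsimp only
    by_cases hx : ∃ k, x ∈ D k
    · obtain ⟨k, hk⟩ := hx
      rw [tsum_indicator_apply_of_mem hDd _ hk]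
      exact ENNReal.mul_ne_top (by simp) (ENNReal.inv_ne_top.2 (hD0 k))
    · simp_all [not_exists]
  · simp_rw [comp_tsum_indicator_const_apply hDd c (g := (· ^ p))
      (ENNReal.zero_rpow_of_pos (by linarith)), lintegral_tsum_indicator_const hDm]
    exact (ENNReal.tsum_le_tsum hcμp).trans_lt (ENNReal.tsum_natCast_add_one_inv_rpow_lt_top hp)
  · simp_rw [lintegral_tsum_indicator_const hDm, hcμ]
    exact ENNReal.tsum_natCast_add_one_inv

end MeasureTheory

open Real in
theorem rpow_exp_mul_mul_eq_of_conjugate {p r : ℝ} (hp : p ≠ 1) (hr : 0 < r) (ε t : ℝ) :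
    (exp (ε * t) * (exp (-(ε * p * t) / (p - 1)) * r ^ (-(1 / (p - 1))))) ^ p * r =
      exp (-(ε * p * t) / (p - 1)) * r ^ (-(1 / (p - 1))) := by
  have hp1 : p - 1 ≠ 0 := sub_ne_zero.2 hp
  rw [← mul_assoc, ← exp_add, mul_rpow (exp_pos _).le (rpow_nonneg hr.le _), ← exp_mul,
    ← rpow_mul hr.le, mul_assoc, ← rpow_add_one hr.ne']
  congr 2 <;> field_simp <;> ring

theorem stmt_7_general (p ε a b : ℝ) (hp : 1 < p)
    (ρ : ℝ → ℝ) (hρmeas : Measurable ρ) (hρpos : ∀ t ∈ Set.Icc a b, 0 < ρ t)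
    (hdiv : ∫⁻ t in Set.Icc a b,
        ENNReal.ofReal (Real.exp (-(ε * p * t) / (p - 1)) * ρ t ^ (-(1 / (p - 1)))) = ⊤) :
    ∃ h : ℝ → ℝ, Measurable h ∧ (∀ t, 0 ≤ h t) ∧
      (∫⁻ t in Set.Icc a b, ENNReal.ofReal (h t ^ p * ρ t) < ⊤) ∧
      ∫⁻ t in Set.Icc a b, ENNReal.ofReal (h t * Real.exp (-(ε * t))) = ⊤ := by
  set G : ℝ → ℝ := fun t => Real.exp (-(ε * p * t) / (p - 1)) * ρ t ^ (-(1 / (p - 1)))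
  have hGm : Measurable G := by fun_prop
  set μ := (volume.restrict (Icc a b)).withDensity fun t => ENNReal.ofReal (G t)
  obtain ⟨φ, hφm, hφtop, hφp, hφ⟩ := exists_lintegral_rpow_lt_top_lintegral_eq_top (μ := μ)
    (by rwa [withDensity_apply _ .univ, Measure.restrict_univ]) hp
  rw [lintegral_withDensity_eq_lintegral_mul _ hGm.ennreal_ofReal (hφm.pow_const p)] at hφp
  rw [lintegral_withDensity_eq_lintegral_mul _ hGm.ennreal_ofReal hφm] at hφ
  refine ⟨fun t => Real.exp (ε * t) * (ENNReal.ofReal (G t) * φ t).toReal, by fun_prop,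
    fun t => by positivity, ?_, ?_⟩
  · refine lt_of_eq_of_lt (setLIntegral_congr_fun measurableSet_Icc fun t ht => ?_) hφp
    have hGt : 0 ≤ G t := mul_nonneg (Real.exp_pos _).le (Real.rpow_nonneg (hρpos t ht).le _)
    simp only [Pi.mul_apply, ENNReal.toReal_mul, ENNReal.toReal_ofReal hGt, ← mul_assoc]
    rw [Real.mul_rpow (by positivity) ENNReal.toReal_nonneg, mul_right_comm,
      rpow_exp_mul_mul_eq_of_conjugate hp.ne' (hρpos t ht), ENNReal.ofReal_mul hGt,
      ENNReal.toReal_rpow,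
      ENNReal.ofReal_toReal (ENNReal.rpow_ne_top_of_nonneg (by linarith) (hφtop t))]
  · refine (lintegral_congr fun t => ?_).trans hφ
    rw [mul_right_comm, ← Real.exp_add, add_neg_cancel, Real.exp_zero, one_mul,
      ENNReal.ofReal_toReal (ENNReal.mul_ne_top ENNReal.ofReal_ne_top (hφtop t))]
    rfl

/-- (case p > 1) if `∫_a^b e^{-εpt/(p-1)} ρ(t)^{-1/(p-1)} dt = ∞`, there
is a nonnegative Borel function `h` with `∫_a^b h^p ρ < ∞` and `∫_a^b h e^{-εt} = ∞`. -/
theorem stmt_7 (p ε a b : ℝ) (hp : 1 < p) (hε : 0 < ε) (ha : 0 ≤ a) (hab : a < b)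
    (ρ : ℝ → ℝ) (hρmeas : Measurable ρ) (hρpos : ∀ t ∈ Set.Icc a b, 0 < ρ t)
    (hdiv : ∫⁻ t in Set.Icc a b,
        ENNReal.ofReal (Real.exp (-(ε * p * t) / (p - 1)) * ρ t ^ (-(1 / (p - 1)))) = ⊤) :
    ∃ h : ℝ → ℝ, Measurable h ∧ (∀ t, 0 ≤ h t) ∧
      (∫⁻ t in Set.Icc a b, ENNReal.ofReal (h t ^ p * ρ t) < ⊤) ∧
      ∫⁻ t in Set.Icc a b, ENNReal.ofReal (h t * Real.exp (-(ε * t))) = ⊤ :=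
  stmt_7_general p ε a b hp ρ hρmeas hρpos hdiv
end

section
/- Let ε > 0, 0 ≤ a < b < ∞, and let ρ : [a, b] → (0, ∞) be a Borel function such that the essential supremum (with respect to Lebesgue measure) of e^{-εt} ρ(t)^{-1} over [a, b] is infinite. Then there exists a Borel function h : [a, b] → [0, ∞) such that ∫_a^b h(t) ρ(t) dt < ∞ and ∫_a^b h(t) e^{-εt} dt = ∞. -/
/-!
A function `f` that is not essentially bounded on a finite measure space pairs to `∞` with some
integrable `φ`: put the weight `(2ⁿ μ {2ⁿ < f})⁻¹` on each level set `{2ⁿ < f}`; the weights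
integrate to `∑ 2⁻ⁿ = 2`, while against `f` every level contributes at least `1`.
Applied to `f = e^{-εt}/ρ` on `[a, b]`, the function `h = φ/ρ` has `hρ = φ` and `h e^{-εt} = φ f`.
-/

open MeasureTheory Filter
open scoped ENNReal NNReal

namespace MeasureTheory

variable {α : Type*} [MeasurableSpace α] {μ : Measure α} {f : α → ℝ≥0∞}

lemma measure_lt_ne_zero_of_essSup_eq_top (hf : essSup f μ = ⊤) {c : ℝ≥0∞} (hc : c ≠ ⊤) :
    μ {x | c < f x} ≠ 0 := by
  intro h
  have : essSup f μ ≤ c := essSup_le_of_ae_le c (by simpa [EventuallyLE, ae_iff] using h)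
  exact hc (top_le_iff.mp (hf ▸ this))

theorem exists_lintegral_ne_top_lintegral_mul_eq_top [IsFiniteMeasure μ] (hf : Measurable f)
    (hess : essSup f μ = ⊤) :
    ∃ φ : α → ℝ≥0∞, Measurable φ ∧ ∫⁻ x, φ x ∂μ ≠ ⊤ ∧ ∫⁻ x, φ x * f x ∂μ = ⊤ := by
  set E : ℕ → Set α := fun n => {x | 2 ^ n < f x}
  have hE : ∀ n, MeasurableSet (E n) := fun n => measurableSet_lt measurable_const hf
  have hE0 : ∀ n, μ (E n) ≠ 0 := fun n =>
    measure_lt_ne_zero_of_essSup_eq_top hess (ENNReal.pow_ne_top ENNReal.ofNat_ne_top)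
  set c : ℕ → ℝ≥0∞ := fun n => (2 ^ n * μ (E n))⁻¹
  have hc_mul : ∀ n, c n * μ (E n) = 2⁻¹ ^ n := fun n => by
    rw [show c n = (2 ^ n * μ (E n))⁻¹ from rfl, ENNReal.mul_inv (by simp) (by simp), mul_assoc,
      ENNReal.inv_mul_cancel (hE0 n) (measure_ne_top μ _), mul_one, ENNReal.inv_pow]
  have hc_pow_mul : ∀ n, c n * 2 ^ n * μ (E n) = 1 := fun n => by
    rw [mul_assoc, ENNReal.inv_mul_cancel (mul_ne_zero (by simp) (hE0 n))
      (ENNReal.mul_ne_top (by simp) (measure_ne_top μ _))]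
  have hterm : ∀ n, Measurable ((E n).indicator fun _ => c n) := fun n =>
    measurable_const.indicator (hE n)
  refine ⟨fun x => ∑' n, (E n).indicator (fun _ => c n) x, .tsum hterm, ?_, ?_⟩
  · rw [lintegral_tsum fun n => (hterm n).aemeasurable]
    simp only [lintegral_indicator_const (hE _), hc_mul, ENNReal.tsum_geometric,
      ENNReal.one_sub_inv_two, inv_inv]
    simp
  · have hlevel : ∀ n, 1 ≤ ∫⁻ x, (E n).indicator (fun _ => c n) x * f x ∂μ := fun n =>
      calc 1 = ∫⁻ x, (E n).indicator (fun _ => c n * 2 ^ n) x ∂μ := by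
            rw [lintegral_indicator_const (hE n), hc_pow_mul]
        _ ≤ _ := lintegral_mono fun x => by
            by_cases hx : x ∈ E n
            · simp only [Set.indicator_of_mem hx]
              exact mul_le_mul_right hx.le _
            · simp [Set.indicator_of_notMem hx]
    simp_rw [ENNReal.tsum_mul_right.symm]
    rw [lintegral_tsum (f := fun n x => (E n).indicator (fun _ => c n) x * f x)
      fun n => ((hterm n).mul hf).aemeasurable, eq_top_iff]
    calc ⊤ = ∑' _ : ℕ, (1 : ℝ≥0∞) := (ENNReal.tsum_const_eq_top_of_ne_zero one_ne_zero).symm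
      _ ≤ _ := ENNReal.tsum_le_tsum hlevel

theorem exists_nnreal_lintegral_lt_top_lintegral_mul_eq_top [IsFiniteMeasure μ]
    (hf : Measurable f) (hess : essSup f μ = ⊤) :
    ∃ φ : α → ℝ≥0, Measurable φ ∧ ∫⁻ x, φ x ∂μ < ⊤ ∧ ∫⁻ x, φ x * f x ∂μ = ⊤ := by
  obtain ⟨φ, hφ, hφ_int, hφf_int⟩ := exists_lintegral_ne_top_lintegral_mul_eq_top hf hess
  have hφ_ae : (fun x => ((φ x).toNNReal : ℝ≥0∞)) =ᵐ[μ] φ := by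
    filter_upwards [ae_lt_top hφ hφ_int] with x hx using ENNReal.coe_toNNReal hx.ne
  refine ⟨fun x => (φ x).toNNReal, hφ.ennreal_toNNReal, ?_, ?_⟩
  · rw [lintegral_congr_ae hφ_ae]
    exact hφ_int.lt_top
  · refine (lintegral_congr_ae ?_).trans hφf_int
    filter_upwards [hφ_ae] with x hx
    rw [hx]

end MeasureTheory

theorem stmt_8_general (ε a b : ℝ)
    (ρ : ℝ → ℝ) (hρmeas : Measurable ρ) (hρpos : ∀ t ∈ Set.Icc a b, 0 < ρ t)
    (hess : essSup (fun t => ENNReal.ofReal (Real.exp (-(ε * t)) / ρ t))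
        (volume.restrict (Set.Icc a b)) = ⊤) :
    ∃ h : ℝ → ℝ, Measurable h ∧ (∀ t, 0 ≤ h t) ∧
      (∫⁻ t in Set.Icc a b, ENNReal.ofReal (h t * ρ t) < ⊤) ∧
      ∫⁻ t in Set.Icc a b, ENNReal.ofReal (h t * Real.exp (-(ε * t))) = ⊤ := by
  have hf : Measurable fun t => ENNReal.ofReal (Real.exp (-(ε * t)) / ρ t) := by fun_prop
  obtain ⟨φ, hφ, hφ_int, hφf_int⟩ := exists_nnreal_lintegral_lt_top_lintegral_mul_eq_top hf hess
  refine ⟨(Set.Icc a b).indicator fun t => φ t / ρ t,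
    (hφ.coe_nnreal_real.div hρmeas).indicator measurableSet_Icc,
    Set.indicator_nonneg fun t ht => div_nonneg (φ t).coe_nonneg (hρpos t ht).le, ?_, ?_⟩
  · refine (setLIntegral_congr_fun measurableSet_Icc fun t ht => ?_).trans_lt hφ_int
    simp only [Set.indicator_of_mem ht, div_mul_cancel₀ _ (hρpos t ht).ne',
      ENNReal.ofReal_coe_nnreal]
  · refine (setLIntegral_congr_fun measurableSet_Icc fun t ht => ?_).trans hφf_int
    simp only [Set.indicator_of_mem ht]
    rw [div_mul_eq_mul_div, mul_div_assoc, ENNReal.ofReal_mul (φ t).coe_nonneg,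
      ENNReal.ofReal_coe_nnreal]

/-- (case p = 1) if the essential supremum of `e^{-εt} ρ(t)^{-1}` over
`[a, b]` is infinite, there is a nonnegative Borel function `h` with
`∫_a^b h ρ < ∞` and `∫_a^b h e^{-εt} = ∞`. -/
theorem stmt_8 (ε a b : ℝ) (hε : 0 < ε) (ha : 0 ≤ a) (hab : a < b)
    (ρ : ℝ → ℝ) (hρmeas : Measurable ρ) (hρpos : ∀ t ∈ Set.Icc a b, 0 < ρ t)
    (hess : essSup (fun t => ENNReal.ofReal (Real.exp (-(ε * t)) / ρ t))
        (volume.restrict (Set.Icc a b)) = ⊤) :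
    ∃ h : ℝ → ℝ, Measurable h ∧ (∀ t, 0 ≤ h t) ∧
      (∫⁻ t in Set.Icc a b, ENNReal.ofReal (h t * ρ t) < ⊤) ∧
      ∫⁻ t in Set.Icc a b, ENNReal.ofReal (h t * Real.exp (-(ε * t))) = ⊤ :=
  stmt_8_general ε a b ρ hρmeas hρpos hess
end

section
/- Let 1 ≤ p < ∞, ε > 0, and let ρ : [0, ∞) → (0, ∞) be a Borel, locally integrable function. Suppose R_{p,ρ} = ∞, where R_{p,ρ} = ∫_0^∞ e^{-εpt/(p-1)} ρ(t)^{1/(1-p)} dt if p > 1, and R_{1,ρ} = ‖e^{-εt} ρ(t)^{-1}‖_{L^∞([0,∞))} if p = 1. Then there exists a Borel function q : [0, ∞) → [0, ∞) such that ∫_0^∞ q(t) e^{-εt} dt = ∞ and ∫_0^∞ q(t)^p ρ(t) dt < ∞. -/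
/-!
For `p > 1` let `G` be the integrand of `R_{p,ρ}` and `ν = G dt` on `[0, ∞)`, an infinite
σ-finite measure. Cutting `ν` into disjoint pieces `Cₙ` with `ν Cₙ ≥ 2 ^ (n / (p - 1))`, the
function `φ = ∑ₙ 𝟙_{Cₙ} / ν Cₙ` has `∫ φ dν = ∞` but `∫ φ ^ p dν ≤ ∑ₙ 2⁻ⁿ`, and
`q = e^{εt} G φ` works because `q e^{-εt} = G φ` and `q ^ p ρ = G φ ^ p`.

For `p = 1` let `ν = e^{-εt} dt`. Then `F = e^{-εt} / ρ` has infinite `ν`-essential supremum, so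
there are sets `Aₙ` of finite positive `ν`-measure on which `F ≥ 2ⁿ`, and `q = ∑ₙ 𝟙_{Aₙ} / ν Aₙ`
has `∫ q dν = ∞` while `∫ q ρ dt = ∫ q / F dν ≤ ∑ₙ 2⁻ⁿ`.
-/

open MeasureTheory
open scoped ENNReal

open Set Filter Topology Function

theorem tsum_indicator_const_rpow {α : Type*} {C : ℕ → Set α} (hC : Pairwise (Disjoint on C))
    (a : ℕ → ℝ≥0∞) {p : ℝ} (hp : 0 < p) (x : α) :
    (∑' n, (C n).indicator (fun _ => a n) x) ^ p =
      ∑' n, (C n).indicator (fun _ => a n ^ p) x := by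
  by_cases hx : ∃ n, x ∈ C n
  · obtain ⟨n, hn⟩ := hx
    have hm : ∀ m ≠ n, x ∉ C m := fun m hmn hm => (hC hmn).notMem_of_mem_right hn hm
    rw [tsum_eq_single n fun m hmn => indicator_of_notMem (hm m hmn) _,
      tsum_eq_single n fun m hmn => indicator_of_notMem (hm m hmn) _,
      indicator_of_mem hn, indicator_of_mem hn]
  · simp only [not_exists] at hx
    simp [indicator_of_notMem (hx _), hp]

theorem ENNReal.inv_rpow_mul_self {c : ℝ≥0∞} (h0 : c ≠ 0) (htop : c ≠ ∞) (p : ℝ) :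
    c⁻¹ ^ p * c = (c ^ (p - 1))⁻¹ := by
  rw [ENNReal.rpow_sub _ _ h0 htop, ENNReal.rpow_one, ENNReal.inv_rpow, ENNReal.div_eq_inv_mul,
    ENNReal.mul_inv (Or.inl (ENNReal.inv_ne_zero.2 htop)) (Or.inl (ENNReal.inv_ne_top.2 h0)),
    inv_inv, mul_comm]

section Measure

variable {α : Type*} [MeasurableSpace α]

theorem lintegral_tsum_indicator_const (μ : Measure α) {A : ℕ → Set α}
    (hA : ∀ n, MeasurableSet (A n)) (c : ℕ → ℝ≥0∞) :
    ∫⁻ x, ∑' n, (A n).indicator (fun _ => c n) x ∂μ = ∑' n, c n * μ (A n) := by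
  rw [lintegral_tsum fun n => (measurable_const.indicator (hA n)).aemeasurable]
  simp_rw [lintegral_indicator_const (hA _)]

noncomputable def normalizedIndicatorSum (ν : Measure α) (A : ℕ → Set α) (x : α) : ℝ≥0∞ :=
  ∑' n, (A n).indicator (fun _ => (ν (A n))⁻¹) x

theorem measurable_normalizedIndicatorSum (ν : Measure α) {A : ℕ → Set α}
    (hA : ∀ n, MeasurableSet (A n)) : Measurable (normalizedIndicatorSum ν A) :=
  Measurable.tsum fun n => measurable_const.indicator (hA n)

theorem lintegral_normalizedIndicatorSum (ν : Measure α) {A : ℕ → Set α}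
    (hA : ∀ n, MeasurableSet (A n)) (h0 : ∀ n, ν (A n) ≠ 0) (htop : ∀ n, ν (A n) ≠ ∞) :
    ∫⁻ x, normalizedIndicatorSum ν A x ∂ν = ∞ := by
  unfold normalizedIndicatorSum
  rw [lintegral_tsum_indicator_const ν hA]
  simp_rw [ENNReal.inv_mul_cancel (h0 _) (htop _)]
  exact ENNReal.tsum_const_eq_top_of_ne_zero one_ne_zero

theorem exists_pairwise_disjoint_le_measure_lt_top {ν : Measure α} [SigmaFinite ν]
    (hν : ν univ = ∞) (b : ℕ → ℝ≥0∞) (hb : ∀ n, b n ≠ ∞) :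
    ∃ C : ℕ → Set α, (∀ n, MeasurableSet (C n)) ∧ Pairwise (Disjoint on C) ∧
      ∀ n, b n ≤ ν (C n) ∧ ν (C n) < ∞ := by
  set E := spanningSets ν
  have hEfin k : ν (E k) ≠ ∞ := (measure_spanningSets_lt_top ν k).ne
  have hE : Tendsto (ν ∘ E) atTop (𝓝 ∞) := by
    simpa [E, iUnion_spanningSets, hν] using
      tendsto_measure_iUnion_atTop (μ := ν) (monotone_spanningSets ν)
  have hgrow n k : ∃ k', k ≤ k' ∧ ν (E k) + b n < ν (E k') :=
    ((eventually_ge_atTop k).and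
      (hE.eventually (lt_mem_nhds (ENNReal.add_ne_top.2 ⟨hEfin k, hb n⟩).lt_top))).exists
  choose next hnext_ge hnext using hgrow
  let N : ℕ → ℕ := fun n => Nat.rec 0 next n
  have hN : Monotone (E ∘ N) :=
    (monotone_spanningSets ν).comp (monotone_nat_of_le_succ fun n => hnext_ge n (N n))
  refine ⟨fun n => E (N (n + 1)) \ E (N n), fun n => (measurableSet_spanningSets ν _).diff
    (measurableSet_spanningSets ν _), (pairwise_disjoint_on _).2 fun i j hij => ?_, fun n => ?_⟩
  · exact disjoint_sdiff_right.mono_left (sdiff_subset.trans (hN (Nat.succ_le_of_lt hij)))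
  · have hsub : E (N n) ⊆ E (N (n + 1)) := hN n.le_succ
    rw [measure_sdiff hsub (measurableSet_spanningSets ν _).nullMeasurableSet (hEfin _)]
    exact ⟨ENNReal.le_sub_of_add_le_left (hEfin _) (hnext n (N n)).le,
      tsub_le_self.trans_lt (measure_spanningSets_lt_top ν _)⟩

theorem exists_lintegral_eq_top_lintegral_rpow_lt_top {ν : Measure α} [SigmaFinite ν]
    (hν : ν univ = ∞) {p : ℝ} (hp : 1 < p) :
    ∃ φ : α → ℝ≥0∞, Measurable φ ∧ ∫⁻ x, φ x ∂ν = ∞ ∧ ∫⁻ x, φ x ^ p ∂ν < ∞ := by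
  have hp1 : 0 < p - 1 := sub_pos.2 hp
  obtain ⟨C, hCm, hCd, hC⟩ := exists_pairwise_disjoint_le_measure_lt_top hν
    (fun n => 2 ^ ((n : ℝ) / (p - 1))) fun n =>
      ENNReal.rpow_ne_top_of_nonneg (by positivity) ENNReal.ofNat_ne_top
  have hC0 n : ν (C n) ≠ 0 :=
    ((ENNReal.rpow_pos two_pos ENNReal.ofNat_ne_top).trans_le (hC n).1).ne'
  refine ⟨normalizedIndicatorSum ν C, measurable_normalizedIndicatorSum ν hCm,
    lintegral_normalizedIndicatorSum ν hCm hC0 fun n => (hC n).2.ne, ?_⟩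
  have hterm n : (ν (C n))⁻¹ ^ p * ν (C n) ≤ 2⁻¹ ^ n := calc
    (ν (C n))⁻¹ ^ p * ν (C n) = (ν (C n) ^ (p - 1))⁻¹ :=
      ENNReal.inv_rpow_mul_self (hC0 n) (hC n).2.ne p
    _ ≤ ((2 ^ ((n : ℝ) / (p - 1))) ^ (p - 1))⁻¹ :=
      ENNReal.inv_le_inv.2 (ENNReal.rpow_le_rpow (hC n).1 hp1.le)
    _ = 2⁻¹ ^ n := by
      rw [← ENNReal.rpow_mul, div_mul_cancel₀ _ hp1.ne', ENNReal.rpow_natCast, ENNReal.inv_pow]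
  simp_rw [normalizedIndicatorSum, tsum_indicator_const_rpow hCd _ (zero_lt_one.trans hp)]
  rw [lintegral_tsum_indicator_const ν hCm]
  exact (ENNReal.tsum_le_tsum hterm).trans_lt
    (tsum_geometric_lt_top.2 (ENNReal.inv_lt_one.2 ENNReal.one_lt_two))

theorem exists_lintegral_eq_top_lintegral_div_lt_top {ν : Measure α} [SigmaFinite ν]
    {F : α → ℝ≥0∞} (hF : Measurable F) (hFtop : essSup F ν = ∞) :
    ∃ Q : α → ℝ≥0∞, Measurable Q ∧ ∫⁻ x, Q x ∂ν = ∞ ∧ ∫⁻ x, Q x / F x ∂ν < ∞ := by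
  have hlevel (n : ℕ) : 0 < ν {x | 2 ^ n ≤ F x} := by
    refine pos_iff_ne_zero.2 fun h0 => ?_
    have hle : F ≤ᵐ[ν] fun _ => 2 ^ n :=
      measure_mono_null (fun x (hx : ¬F x ≤ 2 ^ n) => (not_le.1 hx).le) h0
    exact ENNReal.pow_ne_top ENNReal.ofNat_ne_top
      (top_le_iff.1 (hFtop ▸ essSup_le_of_ae_le _ hle))
  choose A hAm hAsub hApos hAfin using fun n =>
    Measure.exists_subset_measure_lt_top (measurableSet_le measurable_const hF) (hlevel n)
  refine ⟨normalizedIndicatorSum ν A, measurable_normalizedIndicatorSum ν hAm,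
    lintegral_normalizedIndicatorSum ν hAm (fun n => (hApos n).ne') fun n => (hAfin n).ne, ?_⟩
  have hbound x : normalizedIndicatorSum ν A x / F x ≤
      ∑' n, (A n).indicator (fun _ => (ν (A n))⁻¹ * (2 ^ n)⁻¹) x := by
    rw [div_eq_mul_inv, normalizedIndicatorSum, ← ENNReal.tsum_mul_right]
    refine ENNReal.tsum_le_tsum fun n => ?_
    by_cases hx : x ∈ A n
    · simp only [indicator_of_mem hx]
      gcongr
      exact hAsub n hx
    · simp [indicator_of_notMem hx]
  have hterm n : (ν (A n))⁻¹ * (2 ^ n)⁻¹ * ν (A n) = 2⁻¹ ^ n := by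
    rw [mul_right_comm, ENNReal.inv_mul_cancel (hApos n).ne' (hAfin n).ne, one_mul,
      ENNReal.inv_pow]
  refine (lintegral_mono hbound).trans_lt ?_
  rw [lintegral_tsum_indicator_const ν hAm]
  simp_rw [hterm]
  exact tsum_geometric_lt_top.2 (ENNReal.inv_lt_one.2 ENNReal.one_lt_two)

theorem exists_real_of_lintegral_eq_top_of_lintegral_rpow_lt_top {μ : Measure α} {p : ℝ}
    (hp : 0 < p) {w ρ : α → ℝ} (hρm : Measurable ρ) (hρ : ∀ᵐ x ∂μ, 0 < ρ x)
    {Q : α → ℝ≥0∞} (hQ : Measurable Q) (h1 : ∫⁻ x, Q x * ENNReal.ofReal (w x) ∂μ = ∞)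
    (h2 : ∫⁻ x, Q x ^ p * ENNReal.ofReal (ρ x) ∂μ < ∞) :
    ∃ q : α → ℝ, Measurable q ∧ (∀ x, 0 ≤ q x) ∧
      ∫⁻ x, ENNReal.ofReal (q x * w x) ∂μ = ∞ ∧ ∫⁻ x, ENNReal.ofReal (q x ^ p * ρ x) ∂μ < ∞ := by
  have hfin : ∀ᵐ x ∂μ, Q x ≠ ∞ := by
    filter_upwards [ae_lt_top' ((hQ.pow_const p).mul hρm.ennreal_ofReal).aemeasurable h2.ne, hρ]
      with x hx hρx hQx
    simp [hQx, ENNReal.top_rpow_of_pos hp, hρx] at hx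
  refine ⟨fun x => (Q x).toReal, hQ.ennreal_toReal, fun x => ENNReal.toReal_nonneg, ?_, ?_⟩
  · rw [← h1]
    refine lintegral_congr_ae (hfin.mono fun x hx => ?_)
    dsimp only
    rw [ENNReal.ofReal_mul ENNReal.toReal_nonneg, ENNReal.ofReal_toReal hx]
  · refine lt_of_eq_of_lt (lintegral_congr_ae (hfin.mono fun x hx => ?_)) h2
    dsimp only
    rw [ENNReal.ofReal_mul (by positivity),
      ← ENNReal.ofReal_rpow_of_nonneg ENNReal.toReal_nonneg hp.le, ENNReal.ofReal_toReal hx]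

end Measure

/-- The integrand of `R_{p,ρ}` for `p > 1`. -/
noncomputable def dualWeight (p ε : ℝ) (ρ : ℝ → ℝ) (t : ℝ) : ℝ :=
  Real.exp (-(ε * p * t) / (p - 1)) * ρ t ^ (1 / (1 - p))

theorem dualWeight_nonneg (p ε : ℝ) {ρ : ℝ → ℝ} {t : ℝ} (ht : 0 ≤ ρ t) :
    0 ≤ dualWeight p ε ρ t :=
  mul_nonneg (Real.exp_nonneg _) (Real.rpow_nonneg ht _)

theorem measurable_dualWeight (p ε : ℝ) {ρ : ℝ → ℝ} (hρ : Measurable ρ) :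
    Measurable (dualWeight p ε ρ) :=
  (measurable_const.mul measurable_id).neg.div_const _ |>.exp |>.mul (hρ.pow_const _)

theorem rpow_exp_mul_dualWeight_mul {p : ℝ} (hp : p ≠ 1) (ε : ℝ) {ρ : ℝ → ℝ} {t : ℝ}
    (ht : 0 < ρ t) :
    (Real.exp (ε * t) * dualWeight p ε ρ t) ^ p * ρ t = dualWeight p ε ρ t := by
  have hp1 : p - 1 ≠ 0 := sub_ne_zero.2 hp
  have h1p : 1 - p ≠ 0 := sub_ne_zero.2 hp.symm
  unfold dualWeight
  rw [Real.mul_rpow (Real.exp_nonneg _) (by positivity),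
    Real.mul_rpow (Real.exp_nonneg _) (by positivity), ← Real.exp_mul, ← Real.exp_mul,
    ← Real.rpow_mul ht.le]
  calc _ = Real.exp (ε * t * p + -(ε * p * t) / (p - 1) * p) *
        (ρ t ^ (1 / (1 - p) * p) * ρ t ^ (1 : ℝ)) := by
        rw [Real.exp_add, Real.rpow_one]; ring
    _ = _ := by
        rw [← Real.rpow_add ht]
        congr 2 <;> field_simp <;> ring

theorem exists_lintegral_exp_eq_top_of_lintegral_dualWeight_eq_top {p : ℝ} (hp : 1 < p)
    (ε : ℝ) {ρ : ℝ → ℝ} (hρm : Measurable ρ) (hρpos : ∀ t, 0 ≤ t → 0 < ρ t)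
    (hR : ∫⁻ t in Ici 0, ENNReal.ofReal (dualWeight p ε ρ t) = ∞) :
    ∃ Q : ℝ → ℝ≥0∞, Measurable Q ∧
      ∫⁻ t in Ici 0, Q t * ENNReal.ofReal (Real.exp (-(ε * t))) = ∞ ∧
      ∫⁻ t in Ici 0, Q t ^ p * ENNReal.ofReal (ρ t) < ∞ := by
  set G : ℝ → ℝ≥0∞ := fun t => ENNReal.ofReal (dualWeight p ε ρ t)
  have hGm : Measurable G := (measurable_dualWeight p ε hρm).ennreal_ofReal
  set ν := (volume.restrict (Ici (0 : ℝ))).withDensity G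
  have : SigmaFinite ν := SigmaFinite.withDensity_of_ne_top' fun _ => ENNReal.ofReal_ne_top
  obtain ⟨φ, hφm, hφ1, hφp⟩ := exists_lintegral_eq_top_lintegral_rpow_lt_top
    (ν := ν) (by rwa [withDensity_apply _ MeasurableSet.univ, Measure.restrict_univ]) hp
  rw [lintegral_withDensity_eq_lintegral_mul _ hGm hφm] at hφ1
  rw [lintegral_withDensity_eq_lintegral_mul _ hGm (hφm.pow_const p)] at hφp
  refine ⟨fun t => ENNReal.ofReal (Real.exp (ε * t) * dualWeight p ε ρ t) * φ t,
    ((measurable_const.mul measurable_id).exp.mul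
      (measurable_dualWeight p ε hρm)).ennreal_ofReal.mul hφm, ?_, ?_⟩
  · rw [← hφ1]
    refine lintegral_congr fun t => ?_
    simp only [Pi.mul_apply, G]
    rw [mul_right_comm, ← ENNReal.ofReal_mul' (Real.exp_nonneg _), mul_right_comm,
      ← Real.exp_add, add_neg_cancel, Real.exp_zero, one_mul]
  · refine lt_of_eq_of_lt (setLIntegral_congr_fun measurableSet_Ici fun t ht => ?_) hφp
    have hρt := hρpos t ht
    have ha : 0 ≤ Real.exp (ε * t) * dualWeight p ε ρ t :=
      mul_nonneg (Real.exp_nonneg _) (dualWeight_nonneg p ε hρt.le)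
    simp only [Pi.mul_apply, G]
    rw [ENNReal.mul_rpow_of_nonneg _ _ (zero_le_one.trans hp.le),
      ENNReal.ofReal_rpow_of_nonneg ha (zero_le_one.trans hp.le), mul_right_comm,
      ← ENNReal.ofReal_mul (by positivity), rpow_exp_mul_dualWeight_mul hp.ne' ε hρt]

theorem exists_lintegral_exp_eq_top_of_essSup_eq_top (ε : ℝ) {ρ : ℝ → ℝ} (hρm : Measurable ρ)
    (hρpos : ∀ t, 0 ≤ t → 0 < ρ t)
    (hR : essSup (fun t => ENNReal.ofReal (Real.exp (-(ε * t)) / ρ t))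
      (volume.restrict (Ici 0)) = ∞) :
    ∃ Q : ℝ → ℝ≥0∞, Measurable Q ∧
      ∫⁻ t in Ici 0, Q t * ENNReal.ofReal (Real.exp (-(ε * t))) = ∞ ∧
      ∫⁻ t in Ici 0, Q t * ENNReal.ofReal (ρ t) < ∞ := by
  set W : ℝ → ℝ≥0∞ := fun t => ENNReal.ofReal (Real.exp (-(ε * t)))
  have hWm : Measurable W := (measurable_const.mul measurable_id).neg.exp.ennreal_ofReal
  have hW0 t : W t ≠ 0 := (ENNReal.ofReal_pos.2 (Real.exp_pos _)).ne'
  set F : ℝ → ℝ≥0∞ := fun t => ENNReal.ofReal (Real.exp (-(ε * t)) / ρ t)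
  have hFm : Measurable F :=
    ((measurable_const.mul measurable_id).neg.exp.div hρm).ennreal_ofReal
  set ν := (volume.restrict (Ici (0 : ℝ))).withDensity W
  have : SigmaFinite ν := SigmaFinite.withDensity_of_ne_top' fun _ => ENNReal.ofReal_ne_top
  have hFtop : essSup F ν = ∞ := top_le_iff.1 <| hR.symm.le.trans <| essSup_mono_measure <|
    withDensity_absolutelyContinuous' hWm.aemeasurable (ae_of_all _ hW0)
  obtain ⟨Q, hQm, hQ1, hQF⟩ := exists_lintegral_eq_top_lintegral_div_lt_top hFm hFtop
  rw [lintegral_withDensity_eq_lintegral_mul _ hWm hQm] at hQ1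
  rw [lintegral_withDensity_eq_lintegral_mul _ hWm (g := fun x => Q x / F x)
    (hQm.div hFm)] at hQF
  refine ⟨Q, hQm, by simpa only [Pi.mul_apply, mul_comm] using hQ1,
    lt_of_eq_of_lt (setLIntegral_congr_fun measurableSet_Ici fun t ht => ?_) hQF⟩
  simp only [Pi.mul_apply, F, W]
  rw [ENNReal.ofReal_div_of_pos (hρpos t ht), div_eq_mul_inv,
    ENNReal.inv_div (Or.inr ENNReal.ofReal_ne_top) (Or.inr (hW0 t)), mul_left_comm,
    ENNReal.mul_div_cancel (hW0 t) ENNReal.ofReal_ne_top]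

theorem stmt_13_general (p ε : ℝ)
    (ρ : ℝ → ℝ) (hρmeas : Measurable ρ) (hρpos : ∀ t, 0 ≤ t → 0 < ρ t)
    (hR : (1 < p ∧ ∫⁻ t in Set.Ici (0 : ℝ),
            ENNReal.ofReal (Real.exp (-(ε * p * t) / (p - 1)) * ρ t ^ (1 / (1 - p))) = ⊤) ∨
          (p = 1 ∧ essSup (fun t => ENNReal.ofReal (Real.exp (-(ε * t)) / ρ t))
            (volume.restrict (Set.Ici 0)) = ⊤)) :
    ∃ q : ℝ → ℝ, Measurable q ∧ (∀ t, 0 ≤ q t) ∧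
      (∫⁻ t in Set.Ici (0 : ℝ), ENNReal.ofReal (q t * Real.exp (-(ε * t))) = ⊤) ∧
      ∫⁻ t in Set.Ici (0 : ℝ), ENNReal.ofReal (q t ^ p * ρ t) < ⊤ := by
  have hρ : ∀ᵐ t ∂volume.restrict (Ici (0 : ℝ)), 0 < ρ t :=
    ae_restrict_of_forall_mem measurableSet_Ici hρpos
  rcases hR with ⟨hp, hR⟩ | ⟨rfl, hR⟩
  · obtain ⟨Q, hQm, hQ1, hQp⟩ :=
      exists_lintegral_exp_eq_top_of_lintegral_dualWeight_eq_top hp ε hρmeas hρpos hR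
    exact exists_real_of_lintegral_eq_top_of_lintegral_rpow_lt_top (zero_lt_one.trans hp) hρmeas
      hρ hQm hQ1 hQp
  · obtain ⟨Q, hQm, hQ1, hQp⟩ := exists_lintegral_exp_eq_top_of_essSup_eq_top ε hρmeas hρpos hR
    exact exists_real_of_lintegral_eq_top_of_lintegral_rpow_lt_top one_pos hρmeas hρ hQm hQ1
      (by simpa only [ENNReal.rpow_one] using hQp)

/-- if `R_{p,ρ} = ∞` (where `R_{p,ρ} = ∫_0^∞ e^{-εpt/(p-1)} ρ(t)^{1/(1-p)} dt`
for `p > 1` and `R_{1,ρ} = ‖e^{-εt} ρ(t)^{-1}‖_{L^∞([0,∞))}` for `p = 1`), there is a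
nonnegative Borel `q` with `∫_0^∞ q e^{-εt} dt = ∞` and `∫_0^∞ q^p ρ dt < ∞`. -/
theorem stmt_13 (p ε : ℝ) (hp : 1 ≤ p) (hε : 0 < ε)
    (ρ : ℝ → ℝ) (hρmeas : Measurable ρ) (hρpos : ∀ t, 0 ≤ t → 0 < ρ t)
    (hρloc : ∀ T : ℝ, 0 < T → IntegrableOn ρ (Set.Icc 0 T))
    (hR : (1 < p ∧ ∫⁻ t in Set.Ici (0 : ℝ),
            ENNReal.ofReal (Real.exp (-(ε * p * t) / (p - 1)) * ρ t ^ (1 / (1 - p))) = ⊤) ∨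
          (p = 1 ∧ essSup (fun t => ENNReal.ofReal (Real.exp (-(ε * t)) / ρ t))
            (volume.restrict (Set.Ici 0)) = ⊤)) :
    ∃ q : ℝ → ℝ, Measurable q ∧ (∀ t, 0 ≤ q t) ∧
      (∫⁻ t in Set.Ici (0 : ℝ), ENNReal.ofReal (q t * Real.exp (-(ε * t))) = ⊤) ∧
      ∫⁻ t in Set.Ici (0 : ℝ), ENNReal.ofReal (q t ^ p * ρ t) < ⊤ :=
  stmt_13_general p ε ρ hρmeas hρpos hR
end

section
/- Let p > 1, ε > 0, and let ρ : [0, ∞) → (0, ∞) be Borel measurable with R_{p,ρ} = ∫_0^∞ e^{-εpt/(p-1)} ρ(t)^{1/(1-p)} dt < ∞. Let f : [0, ∞) → ℝ and let g : [0, ∞) → [0, ∞) be measurable with ∫_0^∞ g(t)^p ρ(t) dt < ∞, and suppose |f(t₂) − f(t₁)| ≤ ∫_{t₁}^{t₂} g(s) e^{-εs} ds for all 0 ≤ t₁ ≤ t₂. Then the limit L = lim_{t→∞} f(t) exists and is finite, and |L| ≤ |f(0)| + ( ∫_0^∞ g(t)^p ρ(t) dt )^{1/p} · R_{p,ρ}^{(p-1)/p}.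 -/
/-!
Write the integrand as `g e^{-εs} = (g ρ^{1/p}) · (e^{-εs} ρ^{-1/p})`; Hölder's inequality with
the conjugate exponent `q = p/(p-1)` bounds `∫_0^∞ g e^{-εs}` by `A^{1/p} R^{(p-1)/p}`, where
`A = ∫ g^p ρ` and `R = R_{p,ρ}`. So `F t = ∫_0^t g e^{-εs}` converges, the oscillation bound
`|f t₂ - f t₁| ≤ F t₂ - F t₁` makes `f` Cauchy at `∞`, and `|L - f 0| ≤ ∫_0^∞ g e^{-εs}`.
-/

open MeasureTheory Set Filter Topology
open scoped ENNReal

section WeightedHolder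

variable {α : Type*} [MeasurableSpace α] {μ : Measure α} {p q : ℝ} {u v w : α → ℝ}

theorem ENNReal.lintegral_ofReal_mul_le_weighted_Lp_mul_Lq (hpq : p.HolderConjugate q)
    (hu : AEMeasurable u μ) (hv : AEMeasurable v μ) (hw : AEMeasurable w μ)
    (hu0 : 0 ≤ᵐ[μ] u) (hv0 : 0 ≤ᵐ[μ] v) (hw0 : ∀ᵐ x ∂μ, 0 < w x) :
    ∫⁻ x, ENNReal.ofReal (u x * v x) ∂μ ≤
      (∫⁻ x, ENNReal.ofReal (u x ^ p * w x) ∂μ) ^ (1 / p) *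
        (∫⁻ x, ENNReal.ofReal (v x ^ q * w x ^ (1 - q)) ∂μ) ^ (1 / q) := by
  set φ : α → ℝ≥0∞ := fun x => ENNReal.ofReal (u x * w x ^ (1 / p))
  set ψ : α → ℝ≥0∞ := fun x => ENNReal.ofReal (v x * w x ^ (-(1 / p)))
  have hφ : AEMeasurable φ μ := (hu.mul (hw.pow_const _)).ennreal_ofReal
  have hψ : AEMeasurable ψ μ := (hv.mul (hw.pow_const _)).ennreal_ofReal
  have hprod : ∀ᵐ x ∂μ, ENNReal.ofReal (u x * v x) = (φ * ψ) x := by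
    filter_upwards [hu0, hw0] with x hux hwx
    rw [Pi.mul_apply, ← ENNReal.ofReal_mul (mul_nonneg hux (Real.rpow_nonneg hwx.le _)),
      Real.rpow_neg hwx.le]
    congr 1
    field_simp
  have hφp : ∀ᵐ x ∂μ, φ x ^ p = ENNReal.ofReal (u x ^ p * w x) := by
    filter_upwards [hu0, hw0] with x hux hwx
    rw [ENNReal.ofReal_rpow_of_nonneg (mul_nonneg hux (Real.rpow_nonneg hwx.le _)) hpq.nonneg,
      Real.mul_rpow hux (Real.rpow_nonneg hwx.le _), ← Real.rpow_mul hwx.le,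
      one_div_mul_cancel hpq.ne_zero, Real.rpow_one]
  have hψq : ∀ᵐ x ∂μ, ψ x ^ q = ENNReal.ofReal (v x ^ q * w x ^ (1 - q)) := by
    filter_upwards [hv0, hw0] with x hvx hwx
    have hexp : -(1 / p) * q = 1 - q := by
      rw [neg_mul, one_div_mul_eq_div, hpq.symm.div_conj_eq_sub_one, neg_sub]
    rw [ENNReal.ofReal_rpow_of_nonneg (mul_nonneg hvx (Real.rpow_nonneg hwx.le _))
      hpq.symm.nonneg, Real.mul_rpow hvx (Real.rpow_nonneg hwx.le _), ← Real.rpow_mul hwx.le,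
      hexp]
  calc ∫⁻ x, ENNReal.ofReal (u x * v x) ∂μ = ∫⁻ x, (φ * ψ) x ∂μ := lintegral_congr_ae hprod
    _ ≤ (∫⁻ x, φ x ^ p ∂μ) ^ (1 / p) * (∫⁻ x, ψ x ^ q ∂μ) ^ (1 / q) :=
      ENNReal.lintegral_mul_le_Lp_mul_Lq μ hpq hφ hψ
    _ = _ := by rw [lintegral_congr_ae hφp, lintegral_congr_ae hψq]

theorem integrable_mul_and_integral_mul_le_weighted_Lp_mul_Lq (hpq : p.HolderConjugate q)
    (hu : AEMeasurable u μ) (hv : AEMeasurable v μ) (hw : AEMeasurable w μ)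
    (hu0 : 0 ≤ᵐ[μ] u) (hv0 : 0 ≤ᵐ[μ] v) (hw0 : ∀ᵐ x ∂μ, 0 < w x)
    (hU : Integrable (fun x => u x ^ p * w x) μ)
    (hV : Integrable (fun x => v x ^ q * w x ^ (1 - q)) μ) :
    Integrable (fun x => u x * v x) μ ∧
      ∫ x, u x * v x ∂μ ≤
        (∫ x, u x ^ p * w x ∂μ) ^ (1 / p) * (∫ x, v x ^ q * w x ^ (1 - q) ∂μ) ^ (1 / q) := by
  have hU0 : 0 ≤ᵐ[μ] fun x => u x ^ p * w x := by
    filter_upwards [hu0, hw0] with x hux hwx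
    exact mul_nonneg (Real.rpow_nonneg hux _) hwx.le
  have hV0 : 0 ≤ᵐ[μ] fun x => v x ^ q * w x ^ (1 - q) := by
    filter_upwards [hv0, hw0] with x hvx hwx
    exact mul_nonneg (Real.rpow_nonneg hvx _) (Real.rpow_nonneg hwx.le _)
  have huv0 : 0 ≤ᵐ[μ] fun x => u x * v x := by
    filter_upwards [hu0, hv0] with x hux hvx
    exact mul_nonneg hux hvx
  have hA := integral_nonneg_of_ae hU0
  have hB := integral_nonneg_of_ae hV0
  have hbound : ∫⁻ x, ENNReal.ofReal (u x * v x) ∂μ ≤ ENNReal.ofReal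
      ((∫ x, u x ^ p * w x ∂μ) ^ (1 / p) * (∫ x, v x ^ q * w x ^ (1 - q) ∂μ) ^ (1 / q)) := by
    rw [ENNReal.ofReal_mul (by positivity),
      ← ENNReal.ofReal_rpow_of_nonneg hA (one_div_nonneg.2 hpq.nonneg),
      ← ENNReal.ofReal_rpow_of_nonneg hB (one_div_nonneg.2 hpq.symm.nonneg),
      ofReal_integral_eq_lintegral_ofReal hU hU0, ofReal_integral_eq_lintegral_ofReal hV hV0]
    exact ENNReal.lintegral_ofReal_mul_le_weighted_Lp_mul_Lq hpq hu hv hw hu0 hv0 hw0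
  have hint : Integrable (fun x => u x * v x) μ :=
    ⟨(hu.mul hv).aestronglyMeasurable,
      (hasFiniteIntegral_iff_ofReal huv0).2 (hbound.trans_lt ENNReal.ofReal_lt_top)⟩
  refine ⟨hint, (ENNReal.ofReal_le_ofReal_iff (by positivity)).1 ?_⟩
  rwa [ofReal_integral_eq_lintegral_ofReal hint huv0]

end WeightedHolder

theorem exists_tendsto_of_norm_sub_le_intervalIntegral {E : Type*} [NormedAddCommGroup E]
    [CompleteSpace E] {f : ℝ → E} {h : ℝ → ℝ} {a : ℝ} (hh : IntegrableOn h (Ici a))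
    (hf : ∀ t₁ t₂, a ≤ t₁ → t₁ ≤ t₂ → ‖f t₂ - f t₁‖ ≤ ∫ s in t₁..t₂, h s) :
    ∃ L, Tendsto f atTop (𝓝 L) ∧ ‖L - f a‖ ≤ ∫ s in Ici a, h s := by
  set F : ℝ → ℝ := fun t => ∫ s in a..t, h s
  have hF : Tendsto F atTop (𝓝 (∫ s in Ici a, h s)) := by
    rw [integral_Ici_eq_integral_Ioi]
    exact intervalIntegral_tendsto_integral_Ioi a (hh.mono_set Ioi_subset_Ici_self) tendsto_id
  have hii : ∀ t, a ≤ t → IntervalIntegrable h volume a t := fun t ht =>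
    (intervalIntegrable_iff_integrableOn_Icc_of_le ht).2 (hh.mono_set Icc_subset_Ici_self)
  have hdist : ∀ t₁ t₂, a ≤ t₁ → a ≤ t₂ → dist (f t₁) (f t₂) ≤ dist (F t₁) (F t₂) := by
    intro t₁ t₂ h₁ h₂
    wlog h12 : t₁ ≤ t₂ generalizing t₁ t₂
    · rw [dist_comm, dist_comm (F t₁)]
      exact this t₂ t₁ h₂ h₁ (le_of_not_ge h12)
    have hFsub : F t₂ - F t₁ = ∫ s in t₁..t₂, h s :=
      intervalIntegral.integral_interval_sub_left (hii t₂ h₂) (hii t₁ h₁)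
    calc dist (f t₁) (f t₂) = ‖f t₂ - f t₁‖ := by rw [dist_comm, dist_eq_norm]
      _ ≤ F t₂ - F t₁ := hFsub ▸ hf t₁ t₂ h₁ h12
      _ ≤ dist (F t₁) (F t₂) := by rw [dist_comm, Real.dist_eq]; exact le_abs_self _
  have hcauchy : CauchySeq f := by
    have hFc := hF.cauchySeq
    rw [cauchySeq_iff_tendsto_dist_atTop_0] at hFc ⊢
    refine squeeze_zero' (Eventually.of_forall fun _ => dist_nonneg) ?_ hFc
    filter_upwards [eventually_ge_atTop (a, a)] with t ht
    exact hdist t.1 t.2 ht.1 ht.2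
  obtain ⟨L, hL⟩ := cauchySeq_tendsto_of_complete hcauchy
  refine ⟨L, hL, le_of_tendsto_of_tendsto (hL.sub_const (f a)).norm hF ?_⟩
  filter_upwards [eventually_ge_atTop a] with t ht
  exact hf a t le_rfl ht

theorem le_intervalIntegral_of_ofReal_le_setLIntegral_Icc {h : ℝ → ℝ} {x t₁ t₂ : ℝ}
    (h12 : t₁ ≤ t₂) (hh : IntegrableOn h (Icc t₁ t₂)) (hh0 : ∀ s ∈ Icc t₁ t₂, 0 ≤ h s)
    (hx : ENNReal.ofReal x ≤ ∫⁻ s in Icc t₁ t₂, ENNReal.ofReal (h s)) :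
    x ≤ ∫ s in t₁..t₂, h s := by
  rw [intervalIntegral.integral_of_le h12, ← integral_Icc_eq_integral_Ioc,
    ← ENNReal.ofReal_le_ofReal_iff (setIntegral_nonneg measurableSet_Icc hh0),
    ofReal_integral_eq_lintegral_ofReal hh (ae_restrict_of_forall_mem measurableSet_Icc hh0)]
  exact hx

theorem stmt_16_general (p ε : ℝ) (hp : 1 < p)
    (ρ : ℝ → ℝ) (hρmeas : Measurable ρ) (hρpos : ∀ t, 0 ≤ t → 0 < ρ t)
    (hR : IntegrableOn
      (fun t => Real.exp (-(ε * p * t) / (p - 1)) * ρ t ^ (1 / (1 - p))) (Set.Ici 0))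
    (f g : ℝ → ℝ) (hgmeas : Measurable g) (hg0 : ∀ t, 0 ≤ g t)
    (hgint : IntegrableOn (fun t => g t ^ p * ρ t) (Set.Ici 0))
    (hosc : ∀ t₁ t₂ : ℝ, 0 ≤ t₁ → t₁ ≤ t₂ →
      ENNReal.ofReal |f t₂ - f t₁| ≤
        ∫⁻ s in Set.Icc t₁ t₂, ENNReal.ofReal (g s * Real.exp (-(ε * s)))) :
    ∃ L : ℝ, Filter.Tendsto f Filter.atTop (nhds L) ∧
      |L| ≤ |f 0| + (∫ t in Set.Ici (0 : ℝ), g t ^ p * ρ t) ^ (1 / p) *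
        (∫ t in Set.Ici (0 : ℝ),
          Real.exp (-(ε * p * t) / (p - 1)) * ρ t ^ (1 / (1 - p))) ^ ((p - 1) / p) := by
  have hpq := Real.HolderConjugate.conjExponent hp
  have hweight : (fun t => Real.exp (-(ε * t)) ^ p.conjExponent * ρ t ^ (1 - p.conjExponent)) =
      fun t => Real.exp (-(ε * p * t) / (p - 1)) * ρ t ^ (1 / (1 - p)) := by
    have hp1 : p - 1 ≠ 0 := hpq.sub_one_ne_zero
    have hp1' : 1 - p ≠ 0 := by rw [← neg_sub]; exact neg_ne_zero.2 hp1
    ext t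
    rw [Real.conjExponent, ← Real.exp_mul,
      show -(ε * t) * (p / (p - 1)) = -(ε * p * t) / (p - 1) by ring,
      show 1 - p / (p - 1) = 1 / (1 - p) by field_simp; ring]
  obtain ⟨hint, hle⟩ := integrable_mul_and_integral_mul_le_weighted_Lp_mul_Lq
    (μ := volume.restrict (Ici 0)) hpq hgmeas.aemeasurable (by fun_prop) hρmeas.aemeasurable
    (ae_of_all _ hg0) (ae_of_all _ fun _ => (Real.exp_pos _).le)
    (ae_restrict_of_forall_mem measurableSet_Ici hρpos) hgint (hweight ▸ hR)
  rw [hweight, Real.conjExponent, one_div_div] at hle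
  obtain ⟨L, hL, hLf⟩ := exists_tendsto_of_norm_sub_le_intervalIntegral (f := f) hint
    fun t₁ t₂ h₁ h12 => le_intervalIntegral_of_ofReal_le_setLIntegral_Icc h12
      (IntegrableOn.mono_set hint fun _ hs => h₁.trans hs.1)
      (fun s _ => mul_nonneg (hg0 s) (Real.exp_pos _).le) (hosc t₁ t₂ h₁ h12)
  refine ⟨L, hL, ?_⟩
  calc |L| ≤ |f 0| + |L - f 0| := by linarith [abs_sub_abs_le_abs_sub L (f 0)]
    _ ≤ _ := by gcongr; exact hLf.trans hle

/-- one-dimensional core of Lemma 3.1 for `p > 1`: if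
`R_{p,ρ} = ∫_0^∞ e^{-εpt/(p-1)} ρ(t)^{1/(1-p)} dt < ∞` and `f` satisfies the
oscillation bound `|f(t₂) − f(t₁)| ≤ ∫_{t₁}^{t₂} g e^{-εs} ds` with `∫_0^∞ g^p ρ < ∞`,
then `f` has a finite limit `L` at `∞` with
`|L| ≤ |f 0| + (∫_0^∞ g^p ρ)^{1/p} · R_{p,ρ}^{(p-1)/p}`. -/
theorem stmt_16 (p ε : ℝ) (hp : 1 < p) (hε : 0 < ε)
    (ρ : ℝ → ℝ) (hρmeas : Measurable ρ) (hρpos : ∀ t, 0 ≤ t → 0 < ρ t)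
    (hR : IntegrableOn
      (fun t => Real.exp (-(ε * p * t) / (p - 1)) * ρ t ^ (1 / (1 - p))) (Set.Ici 0))
    (f g : ℝ → ℝ) (hfmeas : Measurable f) (hgmeas : Measurable g) (hg0 : ∀ t, 0 ≤ g t)
    (hgint : IntegrableOn (fun t => g t ^ p * ρ t) (Set.Ici 0))
    (hosc : ∀ t₁ t₂ : ℝ, 0 ≤ t₁ → t₁ ≤ t₂ →
      ENNReal.ofReal |f t₂ - f t₁| ≤
        ∫⁻ s in Set.Icc t₁ t₂, ENNReal.ofReal (g s * Real.exp (-(ε * s)))) :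
    ∃ L : ℝ, Filter.Tendsto f Filter.atTop (nhds L) ∧
      |L| ≤ |f 0| + (∫ t in Set.Ici (0 : ℝ), g t ^ p * ρ t) ^ (1 / p) *
        (∫ t in Set.Ici (0 : ℝ),
          Real.exp (-(ε * p * t) / (p - 1)) * ρ t ^ (1 / (1 - p))) ^ ((p - 1) / p) :=
  stmt_16_general p ε hp ρ hρmeas hρpos hR f g hgmeas hg0 hgint hosc
end

section
/- Let ε > 0 and let ρ : [0, ∞) → (0, ∞) be Borel measurable with R_{1,ρ} = ‖e^{-εt} ρ(t)^{-1}‖_{L^∞([0,∞))} < ∞. Let f : [0, ∞) → ℝ and let g : [0, ∞) → [0, ∞) be measurable with ∫_0^∞ g(t) ρ(t) dt < ∞, and suppose |f(t₂) − f(t₁)| ≤ ∫_{t₁}^{t₂} g(s) e^{-εs} ds for all 0 ≤ t₁ ≤ t₂. Then the limit L = lim_{t→∞} f(t) exists and is finite, and |L| ≤ |f(0)| + R_{1,ρ} · ∫_0^∞ g(t) ρ(t) dt. -/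
open MeasureTheory
open scoped ENNReal

/-- one-dimensional core of Lemma 3.1 for `p = 1`: if
`R_{1,ρ} = ‖e^{-εt} ρ(t)^{-1}‖_{L^∞([0,∞))} < ∞` and `f` satisfies the oscillation
bound `|f(t₂) − f(t₁)| ≤ ∫_{t₁}^{t₂} g e^{-εs} ds` with `∫_0^∞ g ρ < ∞`, then `f` has
a finite limit `L` at `∞` with `|L| ≤ |f 0| + R_{1,ρ} · ∫_0^∞ g ρ`. -/
theorem stmt_17 (ε : ℝ) (hε : 0 < ε)
    (ρ : ℝ → ℝ) (hρmeas : Measurable ρ) (hρpos : ∀ t, 0 ≤ t → 0 < ρ t)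
    (hR : essSup (fun t => ENNReal.ofReal (Real.exp (-(ε * t)) / ρ t))
      (volume.restrict (Set.Ici 0)) ≠ ⊤)
    (f g : ℝ → ℝ) (hfmeas : Measurable f) (hgmeas : Measurable g) (hg0 : ∀ t, 0 ≤ g t)
    (hgint : IntegrableOn (fun t => g t * ρ t) (Set.Ici 0))
    (hosc : ∀ t₁ t₂ : ℝ, 0 ≤ t₁ → t₁ ≤ t₂ →
      ENNReal.ofReal |f t₂ - f t₁| ≤
        ∫⁻ s in Set.Icc t₁ t₂, ENNReal.ofReal (g s * Real.exp (-(ε * s)))) :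
    ∃ L : ℝ, Filter.Tendsto f Filter.atTop (nhds L) ∧
      |L| ≤ |f 0| +
        (essSup (fun t => ENNReal.ofReal (Real.exp (-(ε * t)) / ρ t))
          (volume.restrict (Set.Ici 0))).toReal *
        ∫ t in Set.Ici (0 : ℝ), g t * ρ t := by
  set R := essSup (fun t => ENNReal.ofReal (Real.exp (-(ε * t)) / ρ t))
      (volume.restrict (Set.Ici 0)) with hRdef
  set h : ℝ → ℝ := fun s => g s * Real.exp (-(ε * s)) with hh
  have hhmeas : Measurable h := hgmeas.mul ((measurable_const.mul measurable_id).neg.exp)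
  have hh0 : ∀ s, 0 ≤ h s := fun s => mul_nonneg (hg0 s) (Real.exp_pos _).le
  have hgρ0 : ∀ t ∈ Set.Ici (0:ℝ), 0 ≤ g t * ρ t := fun t ht =>
    mul_nonneg (hg0 t) (hρpos t ht).le
  -- a.e. pointwise bound
  have hae : ∀ᵐ t ∂(volume.restrict (Set.Ici (0:ℝ))),
      ENNReal.ofReal (h t) ≤ ENNReal.ofReal (g t * ρ t) * R := by
    filter_upwards [ae_le_essSup (f := fun t => ENNReal.ofReal (Real.exp (-(ε * t)) / ρ t))
        (μ := volume.restrict (Set.Ici 0)),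
      ae_restrict_mem (measurableSet_Ici : MeasurableSet (Set.Ici (0:ℝ)))] with t h1 h2
    have hρt : ρ t ≠ 0 := (hρpos t h2).ne'
    have : h t = (g t * ρ t) * (Real.exp (-(ε * t)) / ρ t) := by
      field_simp [hh]; ring
    rw [this, ENNReal.ofReal_mul (hgρ0 t h2)]
    exact mul_le_mul_right h1 _
  -- finiteness of ∫⁻ of h
  have hlin : ∫⁻ t in Set.Ici (0:ℝ), ENNReal.ofReal (h t) ≤
      ENNReal.ofReal (∫ t in Set.Ici (0:ℝ), g t * ρ t) * R := by
    calc ∫⁻ t in Set.Ici (0:ℝ), ENNReal.ofReal (h t)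
        ≤ ∫⁻ t in Set.Ici (0:ℝ), ENNReal.ofReal (g t * ρ t) * R :=
          lintegral_mono_ae hae
      _ = (∫⁻ t in Set.Ici (0:ℝ), ENNReal.ofReal (g t * ρ t)) * R :=
          lintegral_mul_const' R _ (by simp [hR])
      _ = ENNReal.ofReal (∫ t in Set.Ici (0:ℝ), g t * ρ t) * R := by
          rw [ofReal_integral_eq_lintegral_ofReal hgint
            ((ae_restrict_mem measurableSet_Ici).mono hgρ0)]
  have hltop : ∫⁻ t in Set.Ici (0:ℝ), ENNReal.ofReal (h t) < ⊤ :=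
    lt_of_le_of_lt hlin (ENNReal.mul_lt_top ENNReal.ofReal_lt_top hR.lt_top)

  -- integrability of h on Ici 0
  have hhint : IntegrableOn h (Set.Ici (0:ℝ)) := by
    refine ⟨hhmeas.aestronglyMeasurable, ?_⟩
    rw [hasFiniteIntegral_iff_ofReal ((ae_restrict_mem measurableSet_Ici).mono
      (fun t _ => hh0 t))]
    exact hltop
  set C : ℝ := ∫ t in Set.Ici (0:ℝ), h t with hC
  have hC0 : 0 ≤ C := setIntegral_nonneg measurableSet_Ici fun t _ => hh0 t
  set G : ℝ → ℝ := fun t => ∫ s in Set.Icc 0 t, h s with hG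
  have hGle : ∀ t, G t ≤ C := by
    intro t
    refine setIntegral_mono_set hhint ((ae_restrict_mem measurableSet_Ici).mono
      (fun s _ => hh0 s)) ?_
    exact Filter.Eventually.of_forall fun s hs => hs.1
  have hGadd : ∀ t₁ t₂ : ℝ, 0 ≤ t₁ → t₁ ≤ t₂ →
      (∫ s in Set.Icc t₁ t₂, h s) = G t₂ - G t₁ := by
    intro t₁ t₂ h0 h12
    have hsub₂ : Set.Icc (0:ℝ) t₂ ⊆ Set.Ici 0 := fun s hs => hs.1
    have hu : Set.Icc (0:ℝ) t₁ ∪ Set.Ioc t₁ t₂ = Set.Icc 0 t₂ :=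
      Set.Icc_union_Ioc_eq_Icc h0 h12
    have hdisj : Disjoint (Set.Icc (0:ℝ) t₁) (Set.Ioc t₁ t₂) :=
      Set.disjoint_left.mpr fun s hs hs' => absurd hs'.1 (not_lt.mpr hs.2)
    have h2 : G t₂ = G t₁ + ∫ s in Set.Ioc t₁ t₂, h s := by
      rw [hG]; dsimp only
      rw [← hu, setIntegral_union hdisj measurableSet_Ioc
        (hhint.mono_set (fun s hs => hs.1))
        (hhint.mono_set (fun s hs => h0.trans hs.1.le))]
    rw [integral_Icc_eq_integral_Ioc, h2]; ring
  have hoscR : ∀ t₁ t₂ : ℝ, 0 ≤ t₁ → t₁ ≤ t₂ → |f t₂ - f t₁| ≤ G t₂ - G t₁ := by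
    intro t₁ t₂ h0 h12
    have hint : IntegrableOn h (Set.Icc t₁ t₂) :=
      hhint.mono_set (fun s hs => h0.trans hs.1)
    have heq : (∫⁻ s in Set.Icc t₁ t₂, ENNReal.ofReal (h s)) =
        ENNReal.ofReal (∫ s in Set.Icc t₁ t₂, h s) :=
      (ofReal_integral_eq_lintegral_ofReal hint
        (Filter.Eventually.of_forall fun s => hh0 s)).symm
    have := hosc t₁ t₂ h0 h12
    rw [heq] at this
    have hnn : 0 ≤ ∫ s in Set.Icc t₁ t₂, h s :=
      setIntegral_nonneg measurableSet_Icc fun s _ => hh0 s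
    have h3 : |f t₂ - f t₁| ≤ ∫ s in Set.Icc t₁ t₂, h s :=
      (ENNReal.ofReal_le_ofReal_iff hnn).mp this
    rwa [hGadd t₁ t₂ h0 h12] at h3
  have hGmono : MonotoneOn G (Set.Ici 0) := by
    intro t₁ h1 t₂ h2 h12
    have := hoscR t₁ t₂ h1 h12
    nlinarith [abs_nonneg (f t₂ - f t₁)]
  -- G converges along atTop
  have hGbdd : BddAbove (Set.range fun n : ℕ => G n) := ⟨C, by rintro x ⟨n, rfl⟩; exact hGle n⟩
  set ℓ : ℝ := ⨆ n : ℕ, G n with hℓ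
  have hGn : Filter.Tendsto (fun n : ℕ => G n) Filter.atTop (nhds ℓ) :=
    tendsto_atTop_ciSup (fun m n hmn => hGmono (Set.mem_Ici.mpr (Nat.cast_nonneg m)) (Set.mem_Ici.mpr (Nat.cast_nonneg n))
      (by exact_mod_cast hmn)) hGbdd
  have hGt : Filter.Tendsto G Filter.atTop (nhds ℓ) := by
    rw [Metric.tendsto_atTop]
    intro δ hδ
    obtain ⟨N, hN⟩ := (Metric.tendsto_atTop.mp hGn) (δ/2) (half_pos hδ)
    refine ⟨max N 0, fun t ht => ?_⟩
    have ht0 : (0:ℝ) ≤ t := le_trans (le_max_right _ _) ht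
    have htN : (N:ℝ) ≤ t := le_trans (le_max_left _ _) ht
    obtain ⟨n, hn⟩ := exists_nat_ge t
    have h1 : G N ≤ G t := hGmono (Set.mem_Ici.mpr (Nat.cast_nonneg N)) (Set.mem_Ici.mpr ht0) htN
    have h2 : G t ≤ G n := hGmono (Set.mem_Ici.mpr ht0) (Set.mem_Ici.mpr (Nat.cast_nonneg n)) hn
    have hN1 := hN N le_rfl
    have hN2 := hN n (le_trans (by exact_mod_cast htN.trans hn) le_rfl)
    rw [Real.dist_eq] at *
    rw [abs_sub_lt_iff] at *
    constructor <;> nlinarith [hN1.1, hN1.2, hN2.1, hN2.2]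
  -- f is Cauchy along atTop
  have hcauchy : Cauchy (Filter.map f Filter.atTop) := by
    rw [Metric.cauchy_iff]
    refine ⟨Filter.map_neBot, fun δ hδ => ?_⟩
    obtain ⟨N, hN⟩ := (Metric.tendsto_atTop.mp hGt) (δ/2) (half_pos hδ)
    refine ⟨f '' Set.Ici (max N 0), ?_, ?_⟩
    · exact Filter.image_mem_map (Filter.Ici_mem_atTop _)
    · rintro x ⟨a, ha, rfl⟩ y ⟨b, hb, rfl⟩
      have ha0 : (0:ℝ) ≤ a := le_trans (le_max_right _ _) ha
      have hb0 : (0:ℝ) ≤ b := le_trans (le_max_right _ _) hb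
      have haN : N ≤ a := le_trans (le_max_left _ _) ha
      have hbN : N ≤ b := le_trans (le_max_left _ _) hb
      have key : ∀ u v : ℝ, 0 ≤ u → u ≤ v → N ≤ u → |f v - f u| < δ := by
        intro u v hu huv hNu
        have h1 := hoscR u v hu huv
        have h2 := hN u hNu
        have h3 := hN v (hNu.trans huv)
        rw [Real.dist_eq, abs_sub_lt_iff] at h2 h3
        calc |f v - f u| ≤ G v - G u := h1
          _ < δ := by linarith [h2.1, h2.2, h3.1, h3.2]
      rcases le_total a b with hab | hba
      · rw [Real.dist_eq, abs_sub_comm]; exact key a b ha0 hab haN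
      · rw [Real.dist_eq]; exact key b a hb0 hba hbN
  obtain ⟨L, hL⟩ := CompleteSpace.complete hcauchy
  have hLt : Filter.Tendsto f Filter.atTop (nhds L) := hL
  refine ⟨L, hLt, ?_⟩
  -- the norm bound
  have hdiff : |L - f 0| ≤ C := by
    have habs : Filter.Tendsto (fun t => |f t - f 0|) Filter.atTop (nhds |L - f 0|) :=
      ((hLt.sub_const (f 0)).abs)
    refine le_of_tendsto habs ?_
    filter_upwards [Filter.Ici_mem_atTop (0:ℝ)] with t ht
    have := hoscR 0 t le_rfl ht
    have hG0 : G 0 = 0 := by simp [hG]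
    have := hGle t
    linarith [hoscR 0 t le_rfl ht]
  have hCle : C ≤ R.toReal * ∫ t in Set.Ici (0:ℝ), g t * ρ t := by
    have hIρ : 0 ≤ ∫ t in Set.Ici (0:ℝ), g t * ρ t :=
      setIntegral_nonneg measurableSet_Ici hgρ0
    have h1 : ENNReal.ofReal C = ∫⁻ t in Set.Ici (0:ℝ), ENNReal.ofReal (h t) :=
      ofReal_integral_eq_lintegral_ofReal hhint
        ((ae_restrict_mem measurableSet_Ici).mono (fun t _ => hh0 t))
    have h2 : ENNReal.ofReal C ≤ ENNReal.ofReal (∫ t in Set.Ici (0:ℝ), g t * ρ t) * R :=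
      h1 ▸ hlin
    have h3 := ENNReal.toReal_mono (by exact ENNReal.mul_ne_top ENNReal.ofReal_ne_top hR) h2
    rwa [ENNReal.toReal_ofReal hC0, ENNReal.toReal_mul, ENNReal.toReal_ofReal hIρ,
      mul_comm] at h3
  calc |L| ≤ |f 0| + |L - f 0| := by
        have := abs_sub_abs_le_abs_sub L (f 0); linarith [abs_abs (f 0)]
    _ ≤ |f 0| + R.toReal * ∫ t in Set.Ici (0:ℝ), g t * ρ t := by linarith
end

section
/- Let p > 1, ε > 0, and let ρ : [0, ∞) → (0, ∞) be Borel measurable and locally integrable with ∫_0^∞ ρ(t) dt = ∞. Let (t_k)_{k≥1} be the unique strictly increasing sequence with t₁ = 0, t_k → ∞, and ∫_{t_k}^{t_{k+1}} ρ(t) dt = 1 for all k, and set O_k = [t_k, t_{k+1}). Assume 𝓡_{p,ρ} = sup_{k≥1} ∫_{O_k} e^{-εpt/(p-1)} ρ(t)^{1/(1-p)} dt < ∞. Let f : [0, ∞) → ℝ and g : [0, ∞) → [0, ∞) be measurable with ∫_0^∞ |f(t)|^p ρ(t) dt < ∞ and ∫_0^∞ g(t)^p ρ(t) dt < ∞,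 and suppose |f(t₂) − f(t₁)| ≤ ∫_{t₁}^{t₂} g(s) e^{-εs} ds for all 0 ≤ t₁ ≤ t₂. Then f(t) → 0 as t → ∞. -/
/-!
On each block `O_k = [t_k, t_{k+1})` the weight `ρ` has unit mass, so `|f x|` for `x ∈ O_k` is at
most the oscillation of `f` over `O_k` plus the `ρ`-average of `|f|` over `O_k`. Hölder's inequality
for the measure `ρ dt` bounds the average by `(∫_{O_k} |f|^p ρ)^{1/p}`, and, after writing
`g e^{-εs} = g ρ^{1/p} · e^{-εs} ρ^{-1/p}`, the oscillation by
`(∫_{O_k} g^p ρ)^{1/p} 𝓡_{p,ρ}^{(p-1)/p}`. The block integrals of `|f|^p ρ` and `g^p ρ` are the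
terms of convergent series, so both bounds tend to `0` as `k → ∞`.
-/

open MeasureTheory Filter Set Topology
open scoped ENNReal

theorem ENNReal.lintegral_mul_mul_weight_le_Lp_mul_Lq {α : Type*} [MeasurableSpace α]
    (μ : Measure α) {p q : ℝ} (hpq : p.HolderConjugate q) {F G W : α → ℝ≥0∞}
    (hF : Measurable F) (hG : Measurable G) (hW : Measurable W) :
    ∫⁻ a, F a * G a * W a ∂μ ≤
      (∫⁻ a, F a ^ p * W a ∂μ) ^ (1 / p) * (∫⁻ a, G a ^ q * W a ∂μ) ^ (1 / q) := by
  have hν : ∀ {H : α → ℝ≥0∞}, Measurable H →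
      ∫⁻ a, H a * W a ∂μ = ∫⁻ a, H a ∂μ.withDensity W := fun hH => by
    simp_rw [lintegral_withDensity_eq_lintegral_mul _ hW hH, Pi.mul_apply, mul_comm]
  rw [hν (H := fun a => F a * G a) (hF.mul hG), hν (H := fun a => F a ^ p) (hF.pow_const p),
    hν (H := fun a => G a ^ q) (hG.pow_const q)]
  exact ENNReal.lintegral_mul_le_Lp_mul_Lq _ hpq hF.aemeasurable hG.aemeasurable

theorem setLIntegral_ofReal_mul_le_Lp_mul_Lq_weighted {α : Type*} [MeasurableSpace α]
    {μ : Measure α} {p q : ℝ} (hpq : p.HolderConjugate q) {S : Set α} (hS : MeasurableSet S)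
    {u v w : α → ℝ} (hu : Measurable u) (hv : Measurable v) (hw : Measurable w)
    (hu0 : ∀ x ∈ S, 0 ≤ u x) (hv0 : ∀ x ∈ S, 0 ≤ v x) (hw0 : ∀ x ∈ S, 0 < w x) :
    ∫⁻ x in S, ENNReal.ofReal (u x * v x) ∂μ ≤
      (∫⁻ x in S, ENNReal.ofReal (u x ^ p * w x) ∂μ) ^ (1 / p) *
        (∫⁻ x in S, ENNReal.ofReal (v x ^ q * w x ^ (1 - q)) ∂μ) ^ (1 / q) := by
  have hF : ∀ x ∈ S, ENNReal.ofReal (u x * v x) =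
      ENNReal.ofReal (u x) * ENNReal.ofReal (v x / w x) * ENNReal.ofReal (w x) := fun x hx => by
    rw [← ENNReal.ofReal_mul (hu0 x hx), ← ENNReal.ofReal_mul
      (mul_nonneg (hu0 x hx) (div_nonneg (hv0 x hx) (hw0 x hx).le))]
    congr 1
    field_simp [(hw0 x hx).ne']
  have hFp : ∀ x ∈ S, ENNReal.ofReal (u x ^ p * w x) =
      ENNReal.ofReal (u x) ^ p * ENNReal.ofReal (w x) := fun x hx => by
    rw [ENNReal.ofReal_rpow_of_nonneg (hu0 x hx) hpq.nonneg,
      ENNReal.ofReal_mul (Real.rpow_nonneg (hu0 x hx) p)]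
  have hGq : ∀ x ∈ S, ENNReal.ofReal (v x ^ q * w x ^ (1 - q)) =
      ENNReal.ofReal (v x / w x) ^ q * ENNReal.ofReal (w x) := fun x hx => by
    have hwx := hw0 x hx
    rw [ENNReal.ofReal_rpow_of_nonneg (div_nonneg (hv0 x hx) hwx.le) hpq.symm.nonneg,
      ← ENNReal.ofReal_mul (Real.rpow_nonneg (div_nonneg (hv0 x hx) hwx.le) q),
      Real.div_rpow (hv0 x hx) hwx.le, Real.rpow_sub hwx, Real.rpow_one]
    congr 1
    ring
  rw [setLIntegral_congr_fun hS hF, setLIntegral_congr_fun hS hFp, setLIntegral_congr_fun hS hGq]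
  exact ENNReal.lintegral_mul_mul_weight_le_Lp_mul_Lq _ hpq hu.ennreal_ofReal
    (hv.div hw).ennreal_ofReal hw.ennreal_ofReal

theorem setLIntegral_ofReal_mul_le_of_setLIntegral_eq_one {α : Type*} [MeasurableSpace α]
    {μ : Measure α} {p q : ℝ} (hpq : p.HolderConjugate q) {S : Set α} {u w : α → ℝ}
    (hu : Measurable u) (hw : Measurable w) (hu0 : ∀ x, 0 ≤ u x)
    (hmass : ∫⁻ x in S, ENNReal.ofReal (w x) ∂μ = 1) :
    ∫⁻ x in S, ENNReal.ofReal (u x) * ENNReal.ofReal (w x) ∂μ ≤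
      (∫⁻ x in S, ENNReal.ofReal (u x ^ p * w x) ∂μ) ^ (1 / p) := by
  have hFp : ∀ x, ENNReal.ofReal (u x ^ p * w x) =
      ENNReal.ofReal (u x) ^ p * ENNReal.ofReal (w x) := fun x => by
    rw [ENNReal.ofReal_rpow_of_nonneg (hu0 x) hpq.nonneg,
      ENNReal.ofReal_mul (Real.rpow_nonneg (hu0 x) p)]
  simpa [hFp, hmass] using ENNReal.lintegral_mul_mul_weight_le_Lp_mul_Lq (μ.restrict S) hpq
    hu.ennreal_ofReal measurable_const hw.ennreal_ofReal (G := 1)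

theorem ofReal_abs_le_add_setLIntegral {α : Type*} [MeasurableSpace α] {μ : Measure α}
    {S : Set α} (hS : MeasurableSet S) {W : α → ℝ≥0∞} (hW : Measurable W)
    (hmass : ∫⁻ y in S, W y ∂μ = 1) {f : α → ℝ} {x : α} {D : ℝ≥0∞}
    (hosc : ∀ y ∈ S, ENNReal.ofReal |f x - f y| ≤ D) :
    ENNReal.ofReal |f x| ≤ D + ∫⁻ y in S, ENNReal.ofReal |f y| * W y ∂μ := by
  have hpt : ∀ y ∈ S, ENNReal.ofReal |f x| ≤ D + ENNReal.ofReal |f y| := fun y hy =>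
    calc ENNReal.ofReal |f x| ≤ ENNReal.ofReal (|f x - f y| + |f y|) :=
          ENNReal.ofReal_le_ofReal (by linarith [abs_sub_abs_le_abs_sub (f x) (f y)])
      _ ≤ D + ENNReal.ofReal |f y| := ENNReal.ofReal_add_le.trans (by gcongr; exact hosc y hy)
  calc ENNReal.ofReal |f x| = ∫⁻ y in S, ENNReal.ofReal |f x| * W y ∂μ := by
        rw [lintegral_const_mul _ hW, hmass, mul_one]
    _ ≤ ∫⁻ y in S, (D + ENNReal.ofReal |f y|) * W y ∂μ :=
        setLIntegral_mono' hS fun y hy => by gcongr; exact hpt y hy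
    _ = D + ∫⁻ y in S, ENNReal.ofReal |f y| * W y ∂μ := by
        simp_rw [add_mul]
        rw [lintegral_add_left (hW.const_mul D), lintegral_const_mul _ hW, hmass, mul_one]

theorem Monotone.exists_mem_Ico_succ {α : Type*} [LinearOrder α] {t : ℕ → α} (ht : Monotone t)
    {x : α} {K : ℕ} (hK : t K ≤ x) : ∀ {n : ℕ}, x < t n → ∃ k, K ≤ k ∧ x ∈ Ico (t k) (t (k + 1))
  | 0, hn => absurd ((ht (Nat.zero_le K)).trans hK) (not_le.2 hn)
  | n + 1, hn => by
    rcases lt_or_ge x (t n) with hxn | hnx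
    · exact ht.exists_mem_Ico_succ hK hxn
    · refine ⟨n, ?_, hnx, hn⟩
      by_contra! hnK
      exact absurd ((ht hnK).trans hK) (not_le.2 hn)

theorem tendsto_zero_of_le_on_Ico_succ {α : Type*} [LinearOrder α] [NoMaxOrder α]
    {t : ℕ → α} (ht : Monotone t) (htop : Tendsto t atTop atTop) {u : α → ℝ≥0∞} {φ : ℕ → ℝ≥0∞}
    (hφ : Tendsto φ atTop (𝓝 0)) (hu : ∀ k, ∀ x ∈ Ico (t k) (t (k + 1)), u x ≤ φ k) :
    Tendsto u atTop (𝓝 0) := by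
  rw [ENNReal.tendsto_nhds_zero] at hφ ⊢
  intro δ hδ
  obtain ⟨K, hK⟩ := eventually_atTop.1 (hφ δ hδ)
  filter_upwards [eventually_ge_atTop (t K)] with x hx
  obtain ⟨n, hn⟩ := (htop.eventually_gt_atTop x).exists
  obtain ⟨k, hKk, hxk⟩ := ht.exists_mem_Ico_succ hx hn
  exact (hu k x hxk).trans (hK k hKk)

theorem tendsto_setLIntegral_Ico_succ_zero {μ : Measure ℝ} {t : ℕ → ℝ} (ht : Monotone t)
    {h : ℝ → ℝ≥0∞} (hh : ∫⁻ s in Ici (t 0), h s ∂μ ≠ ∞) :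
    Tendsto (fun k => ∫⁻ s in Ico (t k) (t (k + 1)), h s ∂μ) atTop (𝓝 0) := by
  refine ENNReal.tendsto_atTop_zero_of_tsum_ne_top (ne_top_of_le_ne_top hh ?_)
  have hdisj : Pairwise (Function.onFun Disjoint fun k => Ico (t k) (t (k + 1))) :=
    ht.pairwise_disjoint_on_Ico_succ
  rw [← lintegral_iUnion (fun k => measurableSet_Ico) hdisj]
  exact lintegral_mono_set (iUnion_subset fun k s hs => (ht (Nat.zero_le k)).trans hs.1)

theorem ofReal_abs_le_of_mem_Ico {p ε : ℝ} (hp : 1 < p) {ρ f g : ℝ → ℝ} (hρ : Measurable ρ)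
    (hρpos : ∀ s, 0 ≤ s → 0 < ρ s) (hf : Measurable f) (hg : Measurable g)
    (hg0 : ∀ s, 0 ≤ g s)
    (hosc : ∀ t₁ t₂ : ℝ, 0 ≤ t₁ → t₁ ≤ t₂ → ENNReal.ofReal |f t₂ - f t₁| ≤
      ∫⁻ s in Icc t₁ t₂, ENNReal.ofReal (g s * Real.exp (-(ε * s))))
    {a b x : ℝ} (ha : 0 ≤ a) (hx : x ∈ Ico a b)
    (hmass : ∫⁻ s in Ico a b, ENNReal.ofReal (ρ s) = 1) :
    ENNReal.ofReal |f x| ≤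
      (∫⁻ s in Ico a b, ENNReal.ofReal (g s ^ p * ρ s)) ^ (1 / p) *
        (∫⁻ s in Ico a b, ENNReal.ofReal
          (Real.exp (-(ε * p * s) / (p - 1)) * ρ s ^ (1 / (1 - p)))) ^ (1 / p.conjExponent) +
      (∫⁻ s in Ico a b, ENNReal.ofReal (|f s| ^ p * ρ s)) ^ (1 / p) := by
  have hpq := Real.HolderConjugate.conjExponent hp
  have hosc_Ico : ∀ y ∈ Ico a b, ENNReal.ofReal |f x - f y| ≤
      ∫⁻ s in Ico a b, ENNReal.ofReal (g s * Real.exp (-(ε * s))) := by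
    intro y hy
    rw [setLIntegral_congr Ico_ae_eq_Icc]
    rcases le_total x y with hxy | hyx
    · rw [abs_sub_comm]
      exact (hosc x y (ha.trans hx.1) hxy).trans
        (lintegral_mono_set (Icc_subset_Icc hx.1 hy.2.le))
    · exact (hosc y x (ha.trans hy.1) hyx).trans
        (lintegral_mono_set (Icc_subset_Icc hy.1 hx.2.le))
  have hexp : ∀ s, Real.exp (-(ε * s)) ^ p.conjExponent * ρ s ^ (1 - p.conjExponent) =
      Real.exp (-(ε * p * s) / (p - 1)) * ρ s ^ (1 / (1 - p)) := by
    have hp1 : p - 1 ≠ 0 := sub_ne_zero.2 hp.ne'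
    have hp1' : 1 - p ≠ 0 := sub_ne_zero.2 hp.ne
    intro s
    rw [← Real.exp_mul, Real.conjExponent]
    congr 2
    · field_simp
    · field_simp
      ring
  refine (ofReal_abs_le_add_setLIntegral measurableSet_Ico hρ.ennreal_ofReal hmass hosc_Ico).trans
    (add_le_add ?_ ?_)
  · simpa only [hexp] using setLIntegral_ofReal_mul_le_Lp_mul_Lq_weighted (μ := volume)
      (v := fun s => Real.exp (-(ε * s))) hpq measurableSet_Ico hg (by fun_prop) hρ
      (fun s _ => hg0 s) (fun s _ => (Real.exp_pos _).le) (fun s hs => hρpos s (ha.trans hs.1))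
  · exact setLIntegral_ofReal_mul_le_of_setLIntegral_eq_one hpq hf.abs hρ
      (fun s => abs_nonneg _) hmass

theorem stmt_18_general (p ε : ℝ) (hp : 1 < p)
    (ρ : ℝ → ℝ) (hρmeas : Measurable ρ) (hρpos : ∀ t, 0 ≤ t → 0 < ρ t)
    (t : ℕ → ℝ) (ht0 : t 0 = 0) (htmono : StrictMono t)
    (httop : Filter.Tendsto t Filter.atTop Filter.atTop)
    (htmass : ∀ k : ℕ, ∫⁻ s in Set.Ico (t k) (t (k + 1)), ENNReal.ofReal (ρ s) = 1)
    (hRcal : (⨆ k : ℕ, ∫⁻ s in Set.Ico (t k) (t (k + 1)),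
        ENNReal.ofReal (Real.exp (-(ε * p * s) / (p - 1)) * ρ s ^ (1 / (1 - p)))) < ⊤)
    (f g : ℝ → ℝ) (hfmeas : Measurable f) (hgmeas : Measurable g) (hg0 : ∀ s, 0 ≤ g s)
    (hfint : ∫⁻ s in Set.Ici (0 : ℝ), ENNReal.ofReal (|f s| ^ p * ρ s) < ⊤)
    (hgint : ∫⁻ s in Set.Ici (0 : ℝ), ENNReal.ofReal (g s ^ p * ρ s) < ⊤)
    (hosc : ∀ t₁ t₂ : ℝ, 0 ≤ t₁ → t₁ ≤ t₂ →
      ENNReal.ofReal |f t₂ - f t₁| ≤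
        ∫⁻ s in Set.Icc t₁ t₂, ENNReal.ofReal (g s * Real.exp (-(ε * s)))) :
    Filter.Tendsto f Filter.atTop (nhds 0) := by
  have ht := htmono.monotone
  have hq0 : 0 < 1 / p.conjExponent :=
    one_div_pos.2 (Real.HolderConjugate.conjExponent hp).symm.pos
  have hA := (tendsto_setLIntegral_Ico_succ_zero ht (ht0 ▸ hfint.ne)).ennrpow_const (1 / p)
  have hB := (tendsto_setLIntegral_Ico_succ_zero ht (ht0 ▸ hgint.ne)).ennrpow_const (1 / p)
  have hbound :=
    (ENNReal.Tendsto.mul_const hB (.inr (ENNReal.rpow_ne_top_of_nonneg hq0.le hRcal.ne))).add hA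
  rw [ENNReal.zero_rpow_of_pos (by positivity), zero_mul, zero_add] at hbound
  have habs : Tendsto (fun x => ENNReal.ofReal |f x|) atTop (𝓝 0) :=
    tendsto_zero_of_le_on_Ico_succ ht httop hbound fun k x hx =>
      (ofReal_abs_le_of_mem_Ico hp hρmeas hρpos hfmeas hgmeas hg0 hosc
        (ht0 ▸ ht (Nat.zero_le k)) hx (htmass k)).trans (by gcongr; exact le_iSup_of_le k le_rfl)
  exact (tendsto_zero_iff_abs_tendsto_zero f).2 <| by
    simpa [Function.comp_def] using
      (ENNReal.tendsto_toReal_zero_iff fun _ => ENNReal.ofReal_ne_top).2 habs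

/-- one-dimensional core of Lemma 3.3, (a) ⇒ (b): if `∫_0^∞ ρ = ∞`,
`(t_k)` is the unit-`ρ`-mass partition of `[0, ∞)` and
`𝓡_{p,ρ} = sup_k ∫_{O_k} e^{-εpt/(p-1)} ρ(t)^{1/(1-p)} dt < ∞`, then every `f` in the
weighted Sobolev class (i.e. `∫_0^∞ |f|^p ρ < ∞`, with upper-gradient density `g`
satisfying `∫_0^∞ g^p ρ < ∞` and the oscillation bound) tends to `0` at `∞`. -/
theorem stmt_18 (p ε : ℝ) (hp : 1 < p) (hε : 0 < ε)
    (ρ : ℝ → ℝ) (hρmeas : Measurable ρ) (hρpos : ∀ t, 0 ≤ t → 0 < ρ t)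
    (hρloc : ∀ T : ℝ, 0 < T → IntegrableOn ρ (Set.Icc 0 T))
    (hρdiv : ∫⁻ t in Set.Ici (0 : ℝ), ENNReal.ofReal (ρ t) = ⊤)
    (t : ℕ → ℝ) (ht0 : t 0 = 0) (htmono : StrictMono t)
    (httop : Filter.Tendsto t Filter.atTop Filter.atTop)
    (htmass : ∀ k : ℕ, ∫⁻ s in Set.Ico (t k) (t (k + 1)), ENNReal.ofReal (ρ s) = 1)
    (hRcal : (⨆ k : ℕ, ∫⁻ s in Set.Ico (t k) (t (k + 1)),
        ENNReal.ofReal (Real.exp (-(ε * p * s) / (p - 1)) * ρ s ^ (1 / (1 - p)))) < ⊤)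
    (f g : ℝ → ℝ) (hfmeas : Measurable f) (hgmeas : Measurable g) (hg0 : ∀ s, 0 ≤ g s)
    (hfint : ∫⁻ s in Set.Ici (0 : ℝ), ENNReal.ofReal (|f s| ^ p * ρ s) < ⊤)
    (hgint : ∫⁻ s in Set.Ici (0 : ℝ), ENNReal.ofReal (g s ^ p * ρ s) < ⊤)
    (hosc : ∀ t₁ t₂ : ℝ, 0 ≤ t₁ → t₁ ≤ t₂ →
      ENNReal.ofReal |f t₂ - f t₁| ≤
        ∫⁻ s in Set.Icc t₁ t₂, ENNReal.ofReal (g s * Real.exp (-(ε * s)))) :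
    Filter.Tendsto f Filter.atTop (nhds 0) :=
  stmt_18_general p ε hp ρ hρmeas hρpos t ht0 htmono httop htmass hRcal f g hfmeas hgmeas hg0 hfint
    hgint hosc
end
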